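/- arXiv:2208.01950 — 9 statements merged into one kernel-verified Lean document; each statement's English description precedes it below -/
import Mathlib

section
/- Let G be a connected finite simple graph and x a vertex of G. Let m be the number of neighbors of x having degree 2 in G, let s = ω(G − x), and let r be the number of connected components of G − x that contain at least one degree-2 neighbor of x. Then d(x) + r ≥ m + s. -/
open scoped Classical

private lemma key_reach {V : Type*} (G : SimpleGraph V) (x : V) :
    ∀ {v w : V} (_ : G.Walk v w) (_ : w = x) (hv : v ≠ x),
    ∃ y, G.Adj x y ∧ ∃ hy : y ≠ x,
      (G.induce {y : V | y ≠ x}).Reachable ⟨v, hv⟩ ⟨y, hy⟩ := by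
  intro v w p
  induction p with
  | nil => intro hw hv; exact absurd hw hv
  | @cons a b _ hab p ih =>
    intro hw hv
    by_cases hb : b = x
    · exact ⟨a, ((hb ▸ hab) : G.Adj a x).symm, hv, SimpleGraph.Reachable.refl _⟩
    · obtain ⟨y, hyx, hy, hr⟩ := ih hw (by simpa [hw] using hb)
      refine ⟨y, hyx, hy, SimpleGraph.Reachable.trans ?_ hr⟩
      exact SimpleGraph.Adj.reachable (by exact hab)

private lemma card_split {α : Type*} [Finite α] (p : α → Prop) :
    Nat.card {a // p a} + Nat.card {a // ¬ p a} = Nat.card α := by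
  classical
  have := Fintype.ofFinite α
  rw [Nat.card_eq_fintype_card, Nat.card_eq_fintype_card, Nat.card_eq_fintype_card,
    Fintype.card_subtype_compl]
  have := Fintype.card_subtype_le p
  omega

/-- Let `G` be a connected finite simple graph and `x` a
vertex.  Let `m` be the number of neighbours of `x` having degree 2 in `G`,
`s = ω(G − x)`, and `r` the number of components of `G − x` containing a
degree-2 neighbour of `x`.  Then `d(x) + r ≥ m + s`. -/
theorem deg_add_r_ge {V : Type*} [Fintype V] [DecidableEq V]
    (G : SimpleGraph V) (hconn : G.Connected) (x : V) :
    Nat.card (G.neighborSet x) +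
      Nat.card {C : (G.induce {y : V | y ≠ x}).ConnectedComponent |
        ∃ y : {y : V // y ≠ x},
          (G.induce {y : V | y ≠ x}).connectedComponentMk y = C ∧
          G.Adj x (y : V) ∧ Nat.card (G.neighborSet (y : V)) = 2} ≥
    Nat.card {y : V | G.Adj x y ∧ Nat.card (G.neighborSet y) = 2} +
      Nat.card (G.induce {y : V | y ≠ x}).ConnectedComponent := by
  classical
  set H := G.induce {y : V | y ≠ x} with hH
  set T : H.ConnectedComponent → Prop := fun C =>
    ∃ y : {y : V // y ≠ x}, H.connectedComponentMk y = C ∧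
      G.Adj x (y : V) ∧ Nat.card (G.neighborSet (y : V)) = 2 with hT
  -- key: every vertex ≠ x reaches a neighbour of x inside G - x
  have hkey : ∀ (v : V) (hv : v ≠ x), ∃ y, G.Adj x y ∧ ∃ hy : y ≠ x,
      H.Reachable ⟨v, hv⟩ ⟨y, hy⟩ := by
    intro v hv
    obtain ⟨p⟩ := hconn.preconnected v x
    exact key_reach G x p rfl hv
  -- injection from components without degree-2-neighbours to neighbours of degree ≠ 2
  have hex : ∀ C : {C : H.ConnectedComponent // ¬ T C},
      ∃ y : {y : V // G.Adj x y ∧ ¬ Nat.card (G.neighborSet y) = 2},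
        H.connectedComponentMk ⟨(y : V), y.2.1.ne'⟩ = (C : H.ConnectedComponent) := by
    rintro ⟨C, hC⟩
    obtain ⟨v, hv⟩ := C.exists_rep
    obtain ⟨y, hadj, hy, hr⟩ := hkey (v : V) v.2
    have hmk : H.connectedComponentMk ⟨y, hy⟩ = C := by
      rw [← hv]
      exact (SimpleGraph.ConnectedComponent.sound hr).symm
    have hdeg : ¬ Nat.card (G.neighborSet y) = 2 := fun h2 =>
      hC ⟨⟨y, hy⟩, hmk, hadj, h2⟩
    exact ⟨⟨y, hadj, hdeg⟩, hmk⟩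
  choose f hf using hex
  have hfinj : Function.Injective f := by
    intro C₁ C₂ h
    apply Subtype.ext
    rw [← hf C₁, ← hf C₂, h]
  have hinj : Nat.card {C : H.ConnectedComponent // ¬ T C} ≤
      Nat.card {y : V // G.Adj x y ∧ ¬ Nat.card (G.neighborSet y) = 2} :=
    Nat.card_le_card_of_injective f hfinj
  have split1 := card_split (fun y : V => G.Adj x y)
    -- not directly what we need; do the two real splits:
  have splitN : Nat.card {y : V // G.Adj x y ∧ Nat.card (G.neighborSet y) = 2} +
      Nat.card {y : V // G.Adj x y ∧ ¬ Nat.card (G.neighborSet y) = 2} =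
      Nat.card (G.neighborSet x) := by
    have e : Nat.card (G.neighborSet x) = Nat.card {y : V // G.Adj x y} :=
      Nat.card_congr (Equiv.subtypeEquivRight (fun y => G.mem_neighborSet x y))
    rw [e, ← card_split (fun y : {y : V // G.Adj x y} =>
      Nat.card (G.neighborSet (y : V)) = 2)]
    congr 1
    · exact Nat.card_congr ((Equiv.subtypeSubtypeEquivSubtypeInter _ _).symm)
    · exact Nat.card_congr ((Equiv.subtypeSubtypeEquivSubtypeInter _ _).symm)
  have splitC : Nat.card {C : H.ConnectedComponent // T C} +
      Nat.card {C : H.ConnectedComponent // ¬ T C} =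
      Nat.card H.ConnectedComponent := card_split T
  have hm : Nat.card {y : V | G.Adj x y ∧ Nat.card (G.neighborSet y) = 2} =
      Nat.card {y : V // G.Adj x y ∧ Nat.card (G.neighborSet y) = 2} := rfl
  have hr : Nat.card {C : H.ConnectedComponent | T C} =
      Nat.card {C : H.ConnectedComponent // T C} := rfl
  rw [ge_iff_le, hm, hr]
  omega
end

section
/- Let Γ be a signed graph in which every connected component has at least two vertices, with no pendant vertices. Then η(Γ) ≤ 2c(Γ). Moreover, if some two distinct cycles of Γ share a common vertex, then η(Γ) ≤ 2c(Γ) − 1. -/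
open scoped Classical

/-- The nullity of a real matrix: the dimension of the kernel of the
associated linear map. -/
noncomputable def Matrix.nullity {n : Type*} [Fintype n] (A : Matrix n n ℝ) : ℕ :=
  Module.finrank ℝ (LinearMap.ker A.mulVecLin)

/-- The cyclomatic number `c(G) = |E(G)| − |V(G)| + ω(G)` of a finite simple
graph, where `ω(G)` is the number of connected components. -/
noncomputable def SimpleGraph.cyclomatic {V : Type*} [Fintype V] (G : SimpleGraph V) : ℤ :=
  (Nat.card G.edgeSet : ℤ) - Fintype.card V + Nat.card G.ConnectedComponent

/-!
Fix a spanning forest `F` of `Γ`. The `c(Γ)` edges outside `F` have at most `2 c(Γ)` endpoints;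
call this set `S`. A kernel vector `x` vanishing on `S` satisfies the equations of `F` alone, and
`x` vanishes wherever `F` has degree at most one, because such a vertex meets an edge outside `F`.
The edges of `F` meeting the support of `x` then form a forest without leaves, hence `x = 0`:
restriction to `S` is injective on the kernel and `η(Γ) ≤ |S| ≤ 2 c(Γ)`.

If two distinct cycles `C₁`, `C₂` share a vertex, walk along `C₂` from it until the first edge
`w b₂` not in `C₁`; then `w` lies on `C₁`, so it has an edge `w b₁` on `C₁`, a cycle avoiding
`w b₂`. Deleting both edges keeps the components, so some spanning forest avoids both, and then
`w` is counted twice in `S`, giving `|S| ≤ 2 c(Γ) - 1`.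
-/

open Finset Matrix

lemma Matrix.nullity_le_card {V : Type*} [Fintype V] (A : Matrix V V ℝ) (S : Finset V)
    (h : ∀ x, A *ᵥ x = 0 → (∀ v ∈ S, x v = 0) → x = 0) : A.nullity ≤ #S := by
  let restrict : LinearMap.ker A.mulVecLin →ₗ[ℝ] (S → ℝ) :=
    LinearMap.funLeft ℝ ℝ ((↑) : S → V) ∘ₗ (LinearMap.ker A.mulVecLin).subtype
  have hinj : Function.Injective restrict := by
    rw [← LinearMap.ker_eq_bot, LinearMap.ker_eq_bot']
    intro x hx
    exact Subtype.ext (h x x.2 fun v hv => congrFun hx ⟨v, hv⟩)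
  simpa [Matrix.nullity] using LinearMap.finrank_le_finrank_of_injective hinj

namespace SimpleGraph

variable {V : Type*} {G H : SimpleGraph V}

lemma card_connectedComponent_eq_of_reachable_eq (h : G.Reachable = H.Reachable) :
    Nat.card G.ConnectedComponent = Nat.card H.ConnectedComponent :=
  Nat.card_congr (Equiv.cast (congrArg Quot h))

lemma Reachable.of_forall_adj (h : ∀ x y, G.Adj x y → H.Reachable x y) {a b : V}
    (hab : G.Reachable a b) : H.Reachable a b := by
  obtain ⟨p⟩ := hab
  induction p with
  | nil => rfl
  | cons hadj _ ih => exact (h _ _ hadj).trans ih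

lemma reachable_deleteEdges_eq_of_not_isBridge {u v : V} (h : ¬G.IsBridge s(u, v)) :
    (G.deleteEdges {s(u, v)}).Reachable = G.Reachable := by
  rw [isBridge_iff, not_not] at h
  ext a b
  refine ⟨(·.mono (deleteEdges_le _)), Reachable.of_forall_adj fun x y hxy => ?_⟩
  by_cases hxy' : s(x, y) = s(u, v)
  · rcases Sym2.eq_iff.mp hxy' with ⟨rfl, rfl⟩ | ⟨rfl, rfl⟩
    exacts [h, h.symm]
  · exact Adj.reachable (by simp [hxy, hxy'])

lemma Reachable.deleteEdges_or {a b : V} (hab : G.Reachable a b) (u v : V) :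
    (G.deleteEdges {s(u, v)}).Reachable a b ∨ (G.deleteEdges {s(u, v)}).Reachable a u ∨
      (G.deleteEdges {s(u, v)}).Reachable a v := by
  obtain ⟨p⟩ := hab
  induction p with
  | nil => exact .inl .rfl
  | @cons a c b hac _ ih =>
    by_cases he : s(a, c) = s(u, v)
    · rcases Sym2.eq_iff.mp he with ⟨rfl, -⟩ | ⟨rfl, -⟩
      exacts [.inr (.inl .rfl), .inr (.inr .rfl)]
    · have hac' : (G.deleteEdges {s(u, v)}).Reachable a c := Adj.reachable (by simp [hac, he])
      exact ih.imp hac'.trans (Or.imp hac'.trans hac'.trans)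

lemma IsBridge.card_connectedComponent_deleteEdges [Finite V] {u v : V} (hadj : G.Adj u v)
    (hb : G.IsBridge s(u, v)) :
    Nat.card (G.deleteEdges {s(u, v)}).ConnectedComponent = Nat.card G.ConnectedComponent + 1 := by
  set G' := G.deleteEdges {s(u, v)}
  let φ : {C : G'.ConnectedComponent // C ≠ G'.connectedComponentMk v} → G.ConnectedComponent :=
    fun C => C.1.map (Hom.ofLE (deleteEdges_le _))
  have huv : G'.connectedComponentMk u ≠ G'.connectedComponentMk v :=
    fun h => hb (ConnectedComponent.exact h)
  have hφ : φ.Bijective := by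
    constructor
    · rintro ⟨C, hC⟩ ⟨D, hD⟩ hCD
      induction C using ConnectedComponent.ind with | h a => ?_
      induction D using ConnectedComponent.ind with | h b => ?_
      have hab : G.Reachable a b := ConnectedComponent.exact hCD
      simp only [ne_eq, ConnectedComponent.eq] at hC hD
      refine Subtype.ext (ConnectedComponent.sound ?_)
      rcases hab.deleteEdges_or u v with h | hau | h
      · exact h
      · rcases hab.symm.deleteEdges_or u v with h | hbu | h
        · exact h.symm
        · exact hau.trans hbu.symm
        · exact absurd h hD
      · exact absurd h hC
    · intro C
      induction C using ConnectedComponent.ind with | h a => ?_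
      by_cases ha : G'.connectedComponentMk a = G'.connectedComponentMk v
      · refine ⟨⟨_, huv⟩, ConnectedComponent.sound ?_⟩
        exact hadj.reachable.trans ((ConnectedComponent.exact ha).mono (deleteEdges_le _)).symm
      · exact ⟨⟨_, ha⟩, rfl⟩
  rw [← Nat.card_eq_of_bijective φ hφ, ← Finite.card_option,
    Nat.card_congr (Equiv.optionSubtypeNe _)]

lemma card_connectedComponent_bot :
    Nat.card (⊥ : SimpleGraph V).ConnectedComponent = Nat.card V :=
  (Nat.card_eq_of_bijective _ ⟨fun _ _ h => reachable_bot.mp (ConnectedComponent.exact h),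
    fun C => C.exists_rep⟩).symm

lemma IsAcyclic.card_edgeSet_add_card_connectedComponent [Finite V] (hG : G.IsAcyclic) :
    Nat.card G.edgeSet + Nat.card G.ConnectedComponent = Nat.card V := by
  rw [Nat.card_coe_set_eq]
  induction h : G.edgeSet.ncard generalizing G with
  | zero =>
    rw [Set.ncard_eq_zero, edgeSet_eq_empty] at h
    subst h
    rw [card_connectedComponent_bot, zero_add]
  | succ n ih =>
    obtain ⟨e, he⟩ := Set.nonempty_of_ncard_ne_zero (by rw [h]; omega)
    induction e using Sym2.ind with | h u v => ?_
    have hcard : (G.deleteEdges {s(u, v)}).edgeSet.ncard = n := by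
      rw [edgeSet_deleteEdges, Set.ncard_sdiff_singleton_of_mem he, h, Nat.add_sub_cancel]
    have := ih (hG.anti (deleteEdges_le _)) hcard
    rw [IsBridge.card_connectedComponent_deleteEdges he (isAcyclic_iff_forall_isBridge.mp hG he)]
      at this
    omega

lemma cyclomatic_eq_card_sdiff [Fintype V] {F : SimpleGraph V} (hFG : F ≤ G) (hF : F.IsAcyclic)
    (hreach : F.Reachable = G.Reachable) : G.cyclomatic = #(G.edgeFinset \ F.edgeFinset) := by
  have hF := hF.card_edgeSet_add_card_connectedComponent
  rw [card_connectedComponent_eq_of_reachable_eq hreach] at hF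
  rw [cyclomatic, cast_card_sdiff (edgeFinset_subset_edgeFinset.mpr hFG)]
  simp only [Nat.card_eq_fintype_card, ← edgeFinset_card] at hF ⊢
  omega

lemma IsAcyclic.exists_existsUnique_adj [Finite V] (hG : G.IsAcyclic) {a b : V} (hab : G.Adj a b) :
    ∃ u, ∃! w, G.Adj u w := by
  have : Nonempty V := ⟨a⟩
  obtain ⟨u, v, p, hp, hmax⟩ := Walk.exists_isPath_forall_isPath_length_le_length G
  have hnil : ¬p.Nil := by
    rw [← Walk.length_eq_zero_iff]
    have := hmax _ _ _ (Path.singleton hab).2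
    simp at this
    omega
  refine ⟨u, p.snd, p.adj_snd hnil, fun w hw => hG.eq_snd_of_adj_start hp hw ?_⟩
  by_contra hw'
  have := hmax _ _ (p.cons hw.symm) (hp.cons hw')
  simp at this

theorem IsAcyclic.eq_zero_of_mulVec_eq_zero [Fintype V] {R : Type*} [Semiring R] [NoZeroDivisors R]
    (hG : G.IsAcyclic) {A : Matrix V V R} {x : V → R} (hA : ∀ u v, G.Adj u v → A u v ≠ 0)
    (hsupp : ∀ u v, A u v ≠ 0 → x v ≠ 0 → G.Adj u v) (hdeg : ∀ v, x v ≠ 0 → 2 ≤ G.degree v)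
    (hx : A *ᵥ x = 0) : x = 0 := by
  by_contra hne
  obtain ⟨v, hv⟩ : ∃ v, x v ≠ 0 := Function.ne_iff.mp hne
  have hH : ∀ u w, (G ⊓ fromRel fun u _ => x u ≠ 0).Adj u w ↔ G.Adj u w ∧ (x u ≠ 0 ∨ x w ≠ 0) :=
    fun u w => by
      simp only [inf_adj, fromRel_adj]
      exact ⟨fun h => ⟨h.1, h.2.2⟩, fun h => ⟨h.1, h.1.ne, h.2⟩⟩
  obtain ⟨w, hw⟩ := (G.degree_pos_iff_exists_adj v).mp (by have := hdeg v hv; omega)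
  obtain ⟨ℓ, m, hℓm, hm⟩ : ∃ ℓ, ∃! m, G.Adj ℓ m ∧ (x ℓ ≠ 0 ∨ x m ≠ 0) := by
    simpa only [hH] using
      (hG.anti inf_le_left).exists_existsUnique_adj ((hH v w).2 ⟨hw, .inl hv⟩)
  by_cases hxℓ : x ℓ = 0
  · have hrow : (A *ᵥ x) ℓ = A ℓ m * x m := by
      refine Finset.sum_eq_single m (fun u _ hum => ?_) (by simp)
      by_contra h
      obtain ⟨hAu, hxu⟩ := mul_ne_zero_iff.mp h
      exact hum (hm u ⟨hsupp _ _ hAu hxu, .inr hxu⟩)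
    have hxm : x m ≠ 0 := hℓm.2.resolve_left (not_not.mpr hxℓ)
    exact mul_ne_zero (hA _ _ hℓm.1) hxm (hrow ▸ congrFun hx ℓ)
  · have hdegℓ : G.degree ℓ ≤ 1 := card_le_one.mpr fun a ha b hb => by
      rw [mem_neighborFinset] at ha hb
      rw [hm a ⟨ha, .inl hxℓ⟩, hm b ⟨hb, .inl hxℓ⟩]
    have := hdeg ℓ hxℓ
    omega

lemma nullity_le_card_biUnion_toFinset [Fintype V] {F : SimpleGraph V} {A : Matrix V V ℝ}
    (hA : ∀ u v, A u v ≠ 0 ↔ G.Adj u v) (hdeg : ∀ v, 2 ≤ G.degree v) (hFG : F ≤ G)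
    (hF : F.IsAcyclic) : A.nullity ≤ #((G.edgeFinset \ F.edgeFinset).biUnion Sym2.toFinset) := by
  refine A.nullity_le_card _ fun x hx hS => ?_
  have hout : ∀ u v, G.Adj u v → ¬F.Adj u v → x u = 0 := fun u v huv hFuv =>
    hS u (mem_biUnion.mpr ⟨s(u, v), by simp [huv, hFuv], by simp⟩)
  refine hF.eq_zero_of_mulVec_eq_zero (fun u v h => (hA u v).mpr (hFG h)) (fun u v hAuv hxv => ?_)
    (fun v hxv => ?_) hx
  · by_contra hFuv
    exact hxv (hout v u ((hA u v).mp hAuv).symm (mt F.adj_symm hFuv))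
  · refine (hdeg v).trans (card_le_card fun w hw => ?_)
    rw [mem_neighborFinset] at hw ⊢
    by_contra hFvw
    exact hxv (hout v w hw hFvw)

lemma card_biUnion_toFinset_le (X : Finset (Sym2 V)) : #(X.biUnion Sym2.toFinset) ≤ 2 * #X := by
  rw [mul_comm]
  exact card_biUnion_le_card_mul _ _ _ fun e _ => by rw [Sym2.card_toFinset]; split <;> omega

lemma card_biUnion_toFinset_lt {X : Finset (Sym2 V)} {w b₁ b₂ : V} (h₁ : s(w, b₁) ∈ X)
    (h₂ : s(w, b₂) ∈ X) (hb : b₁ ≠ b₂) : #(X.biUnion Sym2.toFinset) < 2 * #X := by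
  have hsub : X.biUnion Sym2.toFinset ⊆ insert b₁ ((X.erase s(w, b₁)).biUnion Sym2.toFinset) := by
    intro u hu
    obtain ⟨e, he, hue⟩ := mem_biUnion.mp hu
    by_cases heq : e = s(w, b₁)
    · subst heq
      rcases Sym2.mem_iff.mp (Sym2.mem_toFinset.mp hue) with rfl | rfl
      · exact mem_insert_of_mem (mem_biUnion.mpr
          ⟨s(u, b₂), mem_erase.mpr ⟨fun h => hb (Sym2.congr_right.mp h).symm, h₂⟩, by simp⟩)
      · exact mem_insert_self _ _
    · exact mem_insert_of_mem (mem_biUnion.mpr ⟨e, mem_erase.mpr ⟨heq, he⟩, hue⟩)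
  have hX := card_pos.mpr ⟨_, h₁⟩
  calc #(X.biUnion Sym2.toFinset)
      ≤ #((X.erase s(w, b₁)).biUnion Sym2.toFinset) + 1 :=
        (card_le_card hsub).trans (card_insert_le _ _)
    _ ≤ 2 * #(X.erase s(w, b₁)) + 1 := by grw [card_biUnion_toFinset_le]
    _ < 2 * #X := by rw [card_erase_of_mem h₁]; omega

lemma Walk.exists_mk_mem_edges_notMem_edges_of_mem_support {x y u v : V} (q : G.Walk x y)
    (p : G.Walk u v) (hu : u ∈ q.support) {e : Sym2 V} (he : e ∈ p.edges) (he' : e ∉ q.edges) :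
    ∃ w w', s(w, w') ∈ p.edges ∧ s(w, w') ∉ q.edges ∧ w ∈ q.support := by
  induction p with
  | nil => simp at he
  | @cons u c v hadj p ih =>
    by_cases hfirst : s(u, c) ∈ q.edges
    · have he : e ∈ p.edges := (List.mem_cons.mp he).resolve_left (by rintro rfl; exact he' hfirst)
      obtain ⟨w, w', hp, hq, hw⟩ := ih (q.snd_mem_support_of_mem_edges hfirst) he
      exact ⟨w, w', by simp [hp], hq, hw⟩
    · exact ⟨u, c, by simp, hfirst, hu⟩

lemma exists_reachable_deleteEdges_eq_of_isCycle {u₁ u₂ v : V} {c₁ : G.Walk u₁ u₁}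
    {c₂ : G.Walk u₂ u₂} (h₁ : c₁.IsCycle) (h₂ : c₂.IsCycle) (hv₁ : v ∈ c₁.support)
    (hv₂ : v ∈ c₂.support) {e : Sym2 V} (he₂ : e ∈ c₂.edges) (he₁ : e ∉ c₁.edges) :
    ∃ w b₁ b₂, b₁ ≠ b₂ ∧ G.Adj w b₁ ∧ G.Adj w b₂ ∧
      ((G.deleteEdges {s(w, b₂)}).deleteEdges {s(w, b₁)}).Reachable = G.Reachable := by
  obtain ⟨w, b₂, hwb₂, hwb₂₁, hw⟩ :=
    c₁.exists_mk_mem_edges_notMem_edges_of_mem_support (c₂.rotate _ hv₂) hv₁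
      ((c₂.rotate_edges _ hv₂).mem_iff.mpr he₂) he₁
  replace hwb₂ := (c₂.rotate_edges _ hv₂).mem_iff.mp hwb₂
  obtain ⟨f, hf, hwf⟩ := (Walk.mem_support_iff_exists_mem_edges_of_not_nil h₁.not_nil).mp hw
  obtain ⟨b₁, rfl⟩ := Sym2.mem_iff_exists.mp hwf
  refine ⟨w, b₁, b₂, ?_, c₁.adj_of_mem_edges hf, c₂.adj_of_mem_edges hwb₂, ?_⟩
  · rintro rfl
    exact hwb₂₁ hf
  · have hc₁ := Walk.IsCycle.toDeleteEdges G {s(w, b₂)} h₁ fun e he h => by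
      rw [Set.mem_singleton_iff] at h
      exact hwb₂₁ (h ▸ he)
    rw [reachable_deleteEdges_eq_of_not_isBridge, reachable_deleteEdges_eq_of_not_isBridge
      fun hb => hb.notMem_edges_of_isCycle h₂ hwb₂]
    exact fun hb => hb.notMem_edges_of_isCycle hc₁ (by rwa [Walk.edges_transfer])

lemma exists_reachable_deleteEdges_eq_of_toSubgraph_ne {u₁ u₂ v : V} {c₁ : G.Walk u₁ u₁}
    {c₂ : G.Walk u₂ u₂} (h₁ : c₁.IsCycle) (h₂ : c₂.IsCycle) (hne : c₁.toSubgraph ≠ c₂.toSubgraph)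
    (hv₁ : v ∈ c₁.support) (hv₂ : v ∈ c₂.support) :
    ∃ w b₁ b₂, b₁ ≠ b₂ ∧ G.Adj w b₁ ∧ G.Adj w b₂ ∧
      ((G.deleteEdges {s(w, b₂)}).deleteEdges {s(w, b₁)}).Reachable = G.Reachable := by
  by_cases h₂₁ : ∃ e ∈ c₂.edges, e ∉ c₁.edges
  · obtain ⟨e, he₂, he₁⟩ := h₂₁
    exact exists_reachable_deleteEdges_eq_of_isCycle h₁ h₂ hv₁ hv₂ he₂ he₁
  by_cases h₁₂ : ∃ e ∈ c₁.edges, e ∉ c₂.edges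
  · obtain ⟨e, he₁, he₂⟩ := h₁₂
    exact exists_reachable_deleteEdges_eq_of_isCycle h₂ h₁ hv₂ hv₁ he₁ he₂
  push Not at h₂₁ h₁₂
  refine absurd (le_antisymm ?_ ?_) hne
  · exact (Walk.toSubgraph_le_iff h₁.not_nil).mpr fun e he => by simpa using h₁₂ e he
  · exact (Walk.toSubgraph_le_iff h₂.not_nil).mpr fun e he => by simpa using h₂₁ e he

end SimpleGraph

open SimpleGraph

theorem nullity_le_leaf_free_general {V : Type*} [Fintype V]
    (G : SimpleGraph V) (σ : V → V → ℝ)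
    (hσ : ∀ u v, G.Adj u v → σ u v = 1 ∨ σ u v = -1)
    (A : Matrix V V ℝ)
    (hA : ∀ u v, A u v = if G.Adj u v then σ u v else 0)
    (hcomp : ∀ v : V, ∃ u : V, G.Adj v u)
    (hnopendant : ∀ v : V, Nat.card (G.neighborSet v) ≠ 1) :
    (A.nullity : ℤ) ≤ 2 * G.cyclomatic ∧
    ((∃ (u₁ u₂ : V) (w₁ : G.Walk u₁ u₁) (w₂ : G.Walk u₂ u₂) (v : V),
        w₁.IsCycle ∧ w₂.IsCycle ∧ w₁.toSubgraph ≠ w₂.toSubgraph ∧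
        v ∈ w₁.support ∧ v ∈ w₂.support) →
      (A.nullity : ℤ) ≤ 2 * G.cyclomatic - 1) := by
  have hAG : ∀ u v, A u v ≠ 0 ↔ G.Adj u v := fun u v => by
    rw [hA]
    split_ifs with h
    · rcases hσ u v h with h' | h' <;> simp [h, h']
    · simp [h]
  have hdeg : ∀ v, 2 ≤ G.degree v := fun v => by
    have h₁ := hnopendant v
    have h₀ := (G.degree_pos_iff_exists_adj v).mpr (hcomp v)
    rw [Nat.card_eq_fintype_card, card_neighborSet_eq_degree] at h₁
    omega
  constructor
  · obtain ⟨F, hFG, hF, hreach⟩ := G.exists_isAcyclic_reachable_eq_le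
    have hnull := nullity_le_card_biUnion_toFinset hAG hdeg hFG hF
    have hcard := card_biUnion_toFinset_le (G.edgeFinset \ F.edgeFinset)
    rw [cyclomatic_eq_card_sdiff hFG hF hreach]
    omega
  · rintro ⟨u₁, u₂, c₁, c₂, v, h₁, h₂, hne, hv₁, hv₂⟩
    obtain ⟨w, b₁, b₂, hb, hwb₁, hwb₂, hreach⟩ :=
      exists_reachable_deleteEdges_eq_of_toSubgraph_ne h₁ h₂ hne hv₁ hv₂
    obtain ⟨F, hFH, hF, hFreach⟩ :=
      ((G.deleteEdges {s(w, b₂)}).deleteEdges {s(w, b₁)}).exists_isAcyclic_reachable_eq_le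
    have hFG : F ≤ G := hFH.trans ((deleteEdges_le _).trans (deleteEdges_le _))
    have hmem₁ : s(w, b₁) ∈ G.edgeFinset \ F.edgeFinset := by
      simpa [hwb₁] using fun h => (deleteEdges_adj.mp (hFH h)).2 rfl
    have hmem₂ : s(w, b₂) ∈ G.edgeFinset \ F.edgeFinset := by
      simpa [hwb₂] using fun h => (deleteEdges_adj.mp (deleteEdges_adj.mp (hFH h)).1).2 rfl
    have hnull := nullity_le_card_biUnion_toFinset hAG hdeg hFG hF
    have hcard := card_biUnion_toFinset_lt hmem₁ hmem₂ hb
    rw [cyclomatic_eq_card_sdiff hFG hF (hFreach.trans hreach)]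
    omega

/-- Let `Γ` be a signed graph in which every connected
component has at least two vertices and which has no pendant vertices.  Then
`η(Γ) ≤ 2c(Γ)`; moreover if two distinct cycles of `Γ` share a common vertex
then `η(Γ) ≤ 2c(Γ) − 1`. -/
theorem nullity_le_leaf_free {V : Type*} [Fintype V] [DecidableEq V]
    (G : SimpleGraph V) (σ : V → V → ℝ)
    (hsym : ∀ u v, σ u v = σ v u)
    (hσ : ∀ u v, G.Adj u v → σ u v = 1 ∨ σ u v = -1)
    (A : Matrix V V ℝ)
    (hA : ∀ u v, A u v = if G.Adj u v then σ u v else 0)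
    (hcomp : ∀ v : V, ∃ u : V, G.Adj v u)
    (hnopendant : ∀ v : V, Nat.card (G.neighborSet v) ≠ 1) :
    (A.nullity : ℤ) ≤ 2 * G.cyclomatic ∧
    ((∃ (u₁ u₂ : V) (w₁ : G.Walk u₁ u₁) (w₂ : G.Walk u₂ u₂) (v : V),
        w₁.IsCycle ∧ w₂.IsCycle ∧ w₁.toSubgraph ≠ w₂.toSubgraph ∧
        v ∈ w₁.support ∧ v ∈ w₂.support) →
      (A.nullity : ℤ) ≤ 2 * G.cyclomatic - 1) :=
  nullity_le_leaf_free_general G σ hσ A hA hcomp hnopendant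
end

section
/- Let Γ be a signed graph containing an induced path v_1 v_2 v_3 v_4 v_5 v_6 whose internal vertices v_2, v_3, v_4, v_5 all have degree 2 in Γ. Let Γ' be the signed graph obtained by deleting v_2, v_3, v_4, v_5 and adding an edge v_1 v_6 whose sign equals the product of the signs of the five edges of the path. Then η(Γ) = η(Γ'). -/
open scoped Classical

set_option maxHeartbeats 1600000 in
/-- Suppose a signed graph `Γ` contains an induced path
`v₁v₂v₃v₄v₅v₆` whose internal vertices `v₂, v₃, v₄, v₅` all have degree 2.
Let `Γ'` be obtained by deleting `v₂, v₃, v₄, v₅` and adding an edge `v₁v₆`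
whose sign is the product of the signs of the five path edges.  Then
`η(Γ) = η(Γ')`. -/
theorem nullity_contract_path {V : Type*} [Fintype V] [DecidableEq V]
    (G : SimpleGraph V) (σ : V → V → ℝ)
    (hsym : ∀ u v, σ u v = σ v u)
    (hσ : ∀ u v, G.Adj u v → σ u v = 1 ∨ σ u v = -1)
    (A : Matrix V V ℝ)
    (hA : ∀ u v, A u v = if G.Adj u v then σ u v else 0)
    (v₁ v₂ v₃ v₄ v₅ v₆ : V)
    (hdist : [v₁, v₂, v₃, v₄, v₅, v₆].Nodup)
    (h12 : G.Adj v₁ v₂) (h23 : G.Adj v₂ v₃) (h34 : G.Adj v₃ v₄)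
    (h45 : G.Adj v₄ v₅) (h56 : G.Adj v₅ v₆)
    (hd2 : G.neighborSet v₂ = {v₁, v₃}) (hd3 : G.neighborSet v₃ = {v₂, v₄})
    (hd4 : G.neighborSet v₄ = {v₃, v₅}) (hd5 : G.neighborSet v₅ = {v₄, v₆})
    (h16 : ¬ G.Adj v₁ v₆)
    (A' : Matrix {x : V // x ≠ v₂ ∧ x ≠ v₃ ∧ x ≠ v₄ ∧ x ≠ v₅}
                 {x : V // x ≠ v₂ ∧ x ≠ v₃ ∧ x ≠ v₄ ∧ x ≠ v₅} ℝ)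
    (hA' : ∀ x y : {x : V // x ≠ v₂ ∧ x ≠ v₃ ∧ x ≠ v₄ ∧ x ≠ v₅},
      A' x y =
        if ((x : V) = v₁ ∧ (y : V) = v₆) ∨ ((x : V) = v₆ ∧ (y : V) = v₁) then
          σ v₁ v₂ * σ v₂ v₃ * σ v₃ v₄ * σ v₄ v₅ * σ v₅ v₆
        else A (x : V) (y : V)) :
    A.nullity = A'.nullity := by
  classical
  -- distinctness
  have hne : v₁ ≠ v₂ ∧ v₁ ≠ v₃ ∧ v₁ ≠ v₄ ∧ v₁ ≠ v₅ ∧ v₁ ≠ v₆ ∧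
      v₂ ≠ v₃ ∧ v₂ ≠ v₄ ∧ v₂ ≠ v₅ ∧ v₂ ≠ v₆ ∧
      v₃ ≠ v₄ ∧ v₃ ≠ v₅ ∧ v₃ ≠ v₆ ∧ v₄ ≠ v₅ ∧ v₄ ≠ v₆ ∧ v₅ ≠ v₆ := by
    simp only [List.nodup_cons, List.mem_cons, List.mem_singleton,
      List.not_mem_nil, or_false, not_or, List.nodup_nil, and_true] at hdist
    tauto
  obtain ⟨e12, e13, e14, e15, e16, e23, e24, e25, e26, e34, e35, e36, e45, e46, e56⟩ := hne
  have p1 : v₁ ≠ v₂ ∧ v₁ ≠ v₃ ∧ v₁ ≠ v₄ ∧ v₁ ≠ v₅ := ⟨e12, e13, e14, e15⟩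
  have p6 : v₆ ≠ v₂ ∧ v₆ ≠ v₃ ∧ v₆ ≠ v₄ ∧ v₆ ≠ v₅ := ⟨e26.symm, e36.symm, e46.symm, e56.symm⟩
  -- adjacency characterizations
  have adj2 : ∀ u, G.Adj u v₂ ↔ (u = v₁ ∨ u = v₃) := by
    intro u
    rw [G.adj_comm, ← SimpleGraph.mem_neighborSet, hd2]
    simp [Set.mem_insert_iff]
  have adj3 : ∀ u, G.Adj u v₃ ↔ (u = v₂ ∨ u = v₄) := by
    intro u
    rw [G.adj_comm, ← SimpleGraph.mem_neighborSet, hd3]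
    simp [Set.mem_insert_iff]
  have adj4 : ∀ u, G.Adj u v₄ ↔ (u = v₃ ∨ u = v₅) := by
    intro u
    rw [G.adj_comm, ← SimpleGraph.mem_neighborSet, hd4]
    simp [Set.mem_insert_iff]
  have adj5 : ∀ u, G.Adj u v₅ ↔ (u = v₄ ∨ u = v₆) := by
    intro u
    rw [G.adj_comm, ← SimpleGraph.mem_neighborSet, hd5]
    simp [Set.mem_insert_iff]
  -- sign abbreviations
  set s12 := σ v₁ v₂ with hs12
  set s23 := σ v₂ v₃ with hs23
  set s34 := σ v₃ v₄ with hs34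
  set s45 := σ v₄ v₅ with hs45
  set s56 := σ v₅ v₆ with hs56
  have sq : ∀ s : ℝ, (s = 1 ∨ s = -1) → s * s = 1 := by rintro s (rfl | rfl) <;> norm_num
  have sq12 : s12 * s12 = 1 := sq _ (hσ _ _ h12)
  have sq23 : s23 * s23 = 1 := sq _ (hσ _ _ h23)
  have sq34 : s34 * s34 = 1 := sq _ (hσ _ _ h34)
  have sq45 : s45 * s45 = 1 := sq _ (hσ _ _ h45)
  have sq56 : s56 * s56 = 1 := sq _ (hσ _ _ h56)
  -- the finset of deleted vertices
  set P : Finset V := {v₂, v₃, v₄, v₅} with hP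
  have hmemP : ∀ u, u ∈ P ↔ (u = v₂ ∨ u = v₃ ∨ u = v₄ ∨ u = v₅) := by
    intro u; simp [hP]
  have hmemPc : ∀ u, u ∈ Pᶜ ↔ (u ≠ v₂ ∧ u ≠ v₃ ∧ u ≠ v₄ ∧ u ≠ v₅) := by
    intro u; simp [hP, not_or]
  -- rows of A at the internal vertices
  have rowgen : ∀ (u a b : V) (sa sb : ℝ), a ≠ b →
      (∀ v, G.Adj u v ↔ (v = a ∨ v = b)) → A u a = sa → A u b = sb →
      ∀ x : V → ℝ, A.mulVec x u = sa * x a + sb * x b := by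
    intro u a b sa sb hab hadj ha hb x
    have : ∀ v, A u v * x v = if v ∈ ({a, b} : Finset V) then A u v * x v else 0 := by
      intro v
      by_cases h : v ∈ ({a, b} : Finset V)
      · rw [if_pos h]
      · rw [if_neg h]
        simp only [Finset.mem_insert, Finset.mem_singleton, not_or] at h
        rw [hA, if_neg (by rw [hadj]; tauto), zero_mul]
    calc A.mulVec x u = ∑ v, A u v * x v := by
            simp [Matrix.mulVec, dotProduct]
      _ = ∑ v, if v ∈ ({a, b} : Finset V) then A u v * x v else 0 :=
            Finset.sum_congr rfl (fun v _ => this v)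
      _ = ∑ v ∈ ({a, b} : Finset V), A u v * x v := by
            rw [Finset.sum_ite_mem, Finset.univ_inter]
      _ = A u a * x a + A u b * x b := Finset.sum_pair hab
      _ = sa * x a + sb * x b := by rw [ha, hb]
  have Arow2 : ∀ x : V → ℝ, A.mulVec x v₂ = s12 * x v₁ + s23 * x v₃ := by
    refine rowgen v₂ v₁ v₃ s12 s23 e13 ?_ ?_ ?_
    · intro v; rw [G.adj_comm, adj2]
    · rw [hA, if_pos h12.symm, hs12, hsym]
    · rw [hA, if_pos h23]
  have Arow3 : ∀ x : V → ℝ, A.mulVec x v₃ = s23 * x v₂ + s34 * x v₄ := by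
    refine rowgen v₃ v₂ v₄ s23 s34 e24 ?_ ?_ ?_
    · intro v; rw [G.adj_comm, adj3]
    · rw [hA, if_pos h23.symm, hs23, hsym]
    · rw [hA, if_pos h34]
  have Arow4 : ∀ x : V → ℝ, A.mulVec x v₄ = s34 * x v₃ + s45 * x v₅ := by
    refine rowgen v₄ v₃ v₅ s34 s45 e35 ?_ ?_ ?_
    · intro v; rw [G.adj_comm, adj4]
    · rw [hA, if_pos h34.symm, hs34, hsym]
    · rw [hA, if_pos h45]
  have Arow5 : ∀ x : V → ℝ, A.mulVec x v₅ = s45 * x v₄ + s56 * x v₆ := by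
    refine rowgen v₅ v₄ v₆ s45 s56 e46 ?_ ?_ ?_
    · intro v; rw [G.adj_comm, adj5]
    · rw [hA, if_pos h45.symm, hs45, hsym]
    · rw [hA, if_pos h56]
  -- entries of A between P and outside
  have Acol2 : ∀ u, u ≠ v₁ → u ≠ v₃ → A u v₂ = 0 := by
    intro u h1 h3; rw [hA, if_neg]; rw [adj2]; tauto
  have Acol3 : ∀ u, u ≠ v₂ → u ≠ v₄ → A u v₃ = 0 := by
    intro u h1 h3; rw [hA, if_neg]; rw [adj3]; tauto
  have Acol4 : ∀ u, u ≠ v₃ → u ≠ v₅ → A u v₄ = 0 := by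
    intro u h1 h3; rw [hA, if_neg]; rw [adj4]; tauto
  have Acol5 : ∀ u, u ≠ v₄ → u ≠ v₆ → A u v₅ = 0 := by
    intro u h1 h3; rw [hA, if_neg]; rw [adj5]; tauto
  -- sum over P
  have sumP : ∀ (u : V) (x : V → ℝ), ∑ v ∈ P, A u v * x v =
      A u v₂ * x v₂ + A u v₃ * x v₃ + A u v₄ * x v₄ + A u v₅ * x v₅ := by
    intro u x
    rw [hP]
    rw [Finset.sum_insert (by simp [e23, e24, e25]),
        Finset.sum_insert (by simp [e34, e35]),
        Finset.sum_insert (by simp [e45]), Finset.sum_singleton]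
    ring
  -- splitting the full sum
  have sumsplit : ∀ (u : V) (x : V → ℝ), A.mulVec x u =
      (∑ v ∈ Pᶜ, A u v * x v) +
      (A u v₂ * x v₂ + A u v₃ * x v₃ + A u v₄ * x v₄ + A u v₅ * x v₅) := by
    intro u x
    rw [← sumP u x]
    have := Finset.sum_add_sum_compl P (fun v => A u v * x v)
    simp only [Matrix.mulVec, dotProduct]
    rw [← this]; ring
  have hv6Pc : v₆ ∈ Pᶜ := (hmemPc v₆).2 p6
  have hv1Pc : v₁ ∈ Pᶜ := (hmemPc v₁).2 p1
  -- the key identity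
  have key : ∀ (x : V → ℝ),
      (s12 * x v₁ + s23 * x v₃ = 0) →
      (s23 * x v₂ + s34 * x v₄ = 0) →
      (s34 * x v₃ + s45 * x v₅ = 0) →
      (s45 * x v₄ + s56 * x v₆ = 0) →
      ∀ i : {x : V // x ≠ v₂ ∧ x ≠ v₃ ∧ x ≠ v₄ ∧ x ≠ v₅}, (∑ j : {x : V // x ≠ v₂ ∧ x ≠ v₃ ∧ x ≠ v₄ ∧ x ≠ v₅}, A' i j * x j.1) = A.mulVec x i.1 := by
    intro x e2 e3 e4 e5 i
    have hx3 : x v₃ = -(s12 * s23) * x v₁ := by linear_combination s23 * e2 - x v₃ * sq23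
    have hx4 : x v₄ = -(s45 * s56) * x v₆ := by linear_combination s45 * e5 - x v₄ * sq45
    have hx2 : x v₂ = (s23 * s34 * s45 * s56) * x v₆ := by
      have h : x v₂ = -(s23 * s34) * x v₄ := by linear_combination s23 * e3 - x v₂ * sq23
      rw [h, hx4]; ring
    have hx5 : x v₅ = (s12 * s23 * s34 * s45) * x v₁ := by
      have h : x v₅ = -(s34 * s45) * x v₃ := by linear_combination s45 * e4 - x v₅ * sq45
      rw [h, hx3]; ring
    obtain ⟨u, hu⟩ := i
    have hsub : (∑ j : {x : V // x ≠ v₂ ∧ x ≠ v₃ ∧ x ≠ v₄ ∧ x ≠ v₅}, A' ⟨u, hu⟩ j * x j.1) =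
        ∑ v ∈ Pᶜ, (if (u = v₁ ∧ v = v₆) ∨ (u = v₆ ∧ v = v₁) then
            s12 * s23 * s34 * s45 * s56 else A u v) * x v := by
      rw [Finset.sum_subtype Pᶜ hmemPc
        (fun v => (if (u = v₁ ∧ v = v₆) ∨ (u = v₆ ∧ v = v₁) then
            s12 * s23 * s34 * s45 * s56 else A u v) * x v)]
      exact Finset.sum_congr rfl (fun j _ => by rw [hA'])
    rw [hsub, sumsplit u x]
    by_cases hu1 : u = v₁
    · have hu1' : v₁ = u := hu1.symm
      subst hu1'
      rw [Acol3 v₁ hu.1 hu.2.2.1, Acol4 v₁ hu.2.1 hu.2.2.2, Acol5 v₁ hu.2.2.1 e16,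
          hA v₁ v₂, if_pos h12]
      have hL : ∑ v ∈ Pᶜ, (if (v₁ = v₁ ∧ v = v₆) ∨ (v₁ = v₆ ∧ v = v₁) then
          s12 * s23 * s34 * s45 * s56 else A v₁ v) * x v =
          (∑ v ∈ Pᶜ.erase v₆, A v₁ v * x v) + (s12 * s23 * s34 * s45 * s56) * x v₆ := by
        rw [← Finset.sum_erase_add _ _ hv6Pc]
        congr 1
        · refine Finset.sum_congr rfl (fun v hv => ?_)
          have hv6 : v ≠ v₆ := Finset.ne_of_mem_erase hv
          rw [if_neg (by tauto)]
        · rw [if_pos (by tauto)]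
      have hR : ∑ v ∈ Pᶜ, A v₁ v * x v =
          (∑ v ∈ Pᶜ.erase v₆, A v₁ v * x v) + 0 * x v₆ := by
        rw [← Finset.sum_erase_add _ _ hv6Pc]
        congr 2
        rw [hA, if_neg h16]
      rw [hL, hR, hx2]
      ring
    · by_cases hu6 : u = v₆
      · have hu6' : v₆ = u := hu6.symm
        subst hu6'
        rw [Acol2 v₆ hu1 hu.2.1, Acol3 v₆ hu.1 hu.2.2.1,
            Acol4 v₆ hu.2.1 hu.2.2.2, hA v₆ v₅, if_pos h56.symm]
        have hL : ∑ v ∈ Pᶜ, (if (v₆ = v₁ ∧ v = v₆) ∨ (v₆ = v₆ ∧ v = v₁) then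
            s12 * s23 * s34 * s45 * s56 else A v₆ v) * x v =
            (∑ v ∈ Pᶜ.erase v₁, A v₆ v * x v) + (s12 * s23 * s34 * s45 * s56) * x v₁ := by
          rw [← Finset.sum_erase_add _ _ hv1Pc]
          congr 1
          · refine Finset.sum_congr rfl (fun v hv => ?_)
            have hv1 : v ≠ v₁ := Finset.ne_of_mem_erase hv
            rw [if_neg (by push_neg; exact ⟨fun h => absurd h (Ne.symm e16), fun _ => hv1⟩)]
          · rw [if_pos (by tauto)]
        have hR : ∑ v ∈ Pᶜ, A v₆ v * x v =
            (∑ v ∈ Pᶜ.erase v₁, A v₆ v * x v) + 0 * x v₁ := by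
          rw [← Finset.sum_erase_add _ _ hv1Pc]
          congr 2
          rw [hA, if_neg (fun h => h16 h.symm)]
        rw [hL, hR, hx5, hsym v₆ v₅, ← hs56]
        ring
      · rw [Acol2 u hu1 hu.2.1, Acol3 u hu.1 hu.2.2.1, Acol4 u hu.2.1 hu.2.2.2,
            Acol5 u hu.2.2.1 hu6]
        have hL : ∀ v, (if (u = v₁ ∧ v = v₆) ∨ (u = v₆ ∧ v = v₁) then
            s12 * s23 * s34 * s45 * s56 else A u v) = A u v := by
          intro v; rw [if_neg (by tauto)]
        simp_rw [hL]
        ring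
  -- the extension map
  set gfun : ({x : V // x ≠ v₂ ∧ x ≠ v₃ ∧ x ≠ v₄ ∧ x ≠ v₅} → ℝ) → (V → ℝ) := fun y u =>
    if h2 : u = v₂ then (s23 * s34 * s45 * s56) * y ⟨v₆, p6⟩
    else if h3 : u = v₃ then -(s12 * s23) * y ⟨v₁, p1⟩
    else if h4 : u = v₄ then -(s45 * s56) * y ⟨v₆, p6⟩
    else if h5 : u = v₅ then (s12 * s23 * s34 * s45) * y ⟨v₁, p1⟩
    else y ⟨u, ⟨h2, h3, h4, h5⟩⟩
    with hgfun
  have g2 : ∀ y, gfun y v₂ = (s23 * s34 * s45 * s56) * y ⟨v₆, p6⟩ := by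
    intro y; rw [hgfun]; simp
  have g3 : ∀ y, gfun y v₃ = -(s12 * s23) * y ⟨v₁, p1⟩ := by
    intro y; rw [hgfun]; simp [Ne.symm e23]
  have g4 : ∀ y, gfun y v₄ = -(s45 * s56) * y ⟨v₆, p6⟩ := by
    intro y; rw [hgfun]; simp [Ne.symm e24, Ne.symm e34]
  have g5 : ∀ y, gfun y v₅ = (s12 * s23 * s34 * s45) * y ⟨v₁, p1⟩ := by
    intro y; rw [hgfun]; simp [Ne.symm e25, Ne.symm e35, Ne.symm e45]
  have gout : ∀ y (u : V) (hu : u ≠ v₂ ∧ u ≠ v₃ ∧ u ≠ v₄ ∧ u ≠ v₅),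
      gfun y u = y ⟨u, hu⟩ := by
    intro y u hu
    rw [hgfun]
    simp only [dif_neg hu.1, dif_neg hu.2.1, dif_neg hu.2.2.1, dif_neg hu.2.2.2]
  -- gfun satisfies the path equations
  have geq : ∀ y : {x : V // x ≠ v₂ ∧ x ≠ v₃ ∧ x ≠ v₄ ∧ x ≠ v₅} → ℝ,
      (s12 * gfun y v₁ + s23 * gfun y v₃ = 0) ∧
      (s23 * gfun y v₂ + s34 * gfun y v₄ = 0) ∧
      (s34 * gfun y v₃ + s45 * gfun y v₅ = 0) ∧
      (s45 * gfun y v₄ + s56 * gfun y v₆ = 0) := by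
    intro y
    rw [g2, g3, g4, g5, gout y v₁ p1, gout y v₆ p6]
    refine ⟨?_, ?_, ?_, ?_⟩
    · linear_combination - y ⟨v₁, p1⟩ * s12 * sq23
    · linear_combination y ⟨v₆, p6⟩ * s34 * s45 * s56 * sq23
    · linear_combination y ⟨v₁, p1⟩ * s12 * s23 * s34 * sq45
    · linear_combination - y ⟨v₆, p6⟩ * s56 * sq45
  -- kernel membership, forward direction
  have hker1 : ∀ x : V → ℝ, A.mulVec x = 0 →
      A'.mulVec (fun j : {x : V // x ≠ v₂ ∧ x ≠ v₃ ∧ x ≠ v₄ ∧ x ≠ v₅} => x j.1) = 0 := by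
    intro x hx
    have hrow : ∀ u, A.mulVec x u = 0 := fun u => congrFun hx u
    have e2 : s12 * x v₁ + s23 * x v₃ = 0 := by rw [← Arow2 x]; exact hrow v₂
    have e3 : s23 * x v₂ + s34 * x v₄ = 0 := by rw [← Arow3 x]; exact hrow v₃
    have e4 : s34 * x v₃ + s45 * x v₅ = 0 := by rw [← Arow4 x]; exact hrow v₄
    have e5 : s45 * x v₄ + s56 * x v₆ = 0 := by rw [← Arow5 x]; exact hrow v₅
    funext i
    have hkey := key x e2 e3 e4 e5 i
    have hmv : A'.mulVec (fun j : {x : V // x ≠ v₂ ∧ x ≠ v₃ ∧ x ≠ v₄ ∧ x ≠ v₅} => x j.1) i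
        = ∑ j : {x : V // x ≠ v₂ ∧ x ≠ v₃ ∧ x ≠ v₄ ∧ x ≠ v₅}, A' i j * x j.1 := by
      simp [Matrix.mulVec, dotProduct]
    rw [Pi.zero_apply, hmv, hkey, hrow]
  -- kernel membership, backward direction
  have hker2 : ∀ y : {x : V // x ≠ v₂ ∧ x ≠ v₃ ∧ x ≠ v₄ ∧ x ≠ v₅} → ℝ, A'.mulVec y = 0 → A.mulVec (gfun y) = 0 := by
    intro y hy
    obtain ⟨e2, e3, e4, e5⟩ := geq y
    funext u
    by_cases hu : u ≠ v₂ ∧ u ≠ v₃ ∧ u ≠ v₄ ∧ u ≠ v₅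
    · have := key (gfun y) e2 e3 e4 e5 ⟨u, hu⟩
      have hres : ∀ j : {x : V // x ≠ v₂ ∧ x ≠ v₃ ∧ x ≠ v₄ ∧ x ≠ v₅}, gfun y j.1 = y j := by
        intro j; rw [gout y j.1 j.2]
      have hy' : ∀ i : {x : V // x ≠ v₂ ∧ x ≠ v₃ ∧ x ≠ v₄ ∧ x ≠ v₅}, (∑ j : {x : V // x ≠ v₂ ∧ x ≠ v₃ ∧ x ≠ v₄ ∧ x ≠ v₅}, A' i j * y j) = 0 := by
        intro i
        have := congrFun hy i
        simpa [Matrix.mulVec, dotProduct] using this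
      simp only [hres] at this
      rw [Pi.zero_apply, ← this, hy' ⟨u, hu⟩]
    · push_neg at hu
      rcases (by tauto : u = v₂ ∨ u = v₃ ∨ u = v₄ ∨ u = v₅) with rfl | rfl | rfl | rfl
      · rw [Arow2, Pi.zero_apply]; exact e2
      · rw [Arow3, Pi.zero_apply]; exact e3
      · rw [Arow4, Pi.zero_apply]; exact e4
      · rw [Arow5, Pi.zero_apply]; exact e5
  -- round trips
  have hfg : ∀ y : {x : V // x ≠ v₂ ∧ x ≠ v₃ ∧ x ≠ v₄ ∧ x ≠ v₅} → ℝ, (fun j : {x : V // x ≠ v₂ ∧ x ≠ v₃ ∧ x ≠ v₄ ∧ x ≠ v₅} => gfun y j.1) = y := by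
    intro y; funext j; rw [gout y j.1 j.2]
  have hgf : ∀ x : V → ℝ, A.mulVec x = 0 → gfun (fun j : {x : V // x ≠ v₂ ∧ x ≠ v₃ ∧ x ≠ v₄ ∧ x ≠ v₅} => x j.1) = x := by
    intro x hx
    have hrow : ∀ u, A.mulVec x u = 0 := fun u => congrFun hx u
    have e2 : s12 * x v₁ + s23 * x v₃ = 0 := by rw [← Arow2 x]; exact hrow v₂
    have e3 : s23 * x v₂ + s34 * x v₄ = 0 := by rw [← Arow3 x]; exact hrow v₃
    have e4 : s34 * x v₃ + s45 * x v₅ = 0 := by rw [← Arow4 x]; exact hrow v₄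
    have e5 : s45 * x v₄ + s56 * x v₆ = 0 := by rw [← Arow5 x]; exact hrow v₅
    have hx3 : x v₃ = -(s12 * s23) * x v₁ := by linear_combination s23 * e2 - x v₃ * sq23
    have hx4 : x v₄ = -(s45 * s56) * x v₆ := by linear_combination s45 * e5 - x v₄ * sq45
    have hx2 : x v₂ = (s23 * s34 * s45 * s56) * x v₆ := by
      have h : x v₂ = -(s23 * s34) * x v₄ := by linear_combination s23 * e3 - x v₂ * sq23
      rw [h, hx4]; ring
    have hx5 : x v₅ = (s12 * s23 * s34 * s45) * x v₁ := by
      have h : x v₅ = -(s34 * s45) * x v₃ := by linear_combination s45 * e4 - x v₅ * sq45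
      rw [h, hx3]; ring
    funext u
    by_cases hu : u ≠ v₂ ∧ u ≠ v₃ ∧ u ≠ v₄ ∧ u ≠ v₅
    · exact gout (fun j => x j.1) u hu
    · push_neg at hu
      rcases (by tauto : u = v₂ ∨ u = v₃ ∨ u = v₄ ∨ u = v₅) with hq | hq | hq | hq
      · rw [hq]; exact (g2 (fun j => x j.1)).trans hx2.symm
      · rw [hq]; exact (g3 (fun j => x j.1)).trans hx3.symm
      · rw [hq]; exact (g4 (fun j => x j.1)).trans hx4.symm
      · rw [hq]; exact (g5 (fun j => x j.1)).trans hx5.symm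
  -- build the linear equivalence between kernels
  have memA : ∀ x : V → ℝ, x ∈ LinearMap.ker A.mulVecLin ↔ A.mulVec x = 0 := by
    intro x; rw [LinearMap.mem_ker, Matrix.mulVecLin_apply]
  have memA' : ∀ y : {x : V // x ≠ v₂ ∧ x ≠ v₃ ∧ x ≠ v₄ ∧ x ≠ v₅} → ℝ, y ∈ LinearMap.ker A'.mulVecLin ↔ A'.mulVec y = 0 := by
    intro y; rw [LinearMap.mem_ker, Matrix.mulVecLin_apply]
  have E : (LinearMap.ker A.mulVecLin) ≃ₗ[ℝ] (LinearMap.ker A'.mulVecLin) :=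
    { toFun := fun x => ⟨fun j : {x : V // x ≠ v₂ ∧ x ≠ v₃ ∧ x ≠ v₄ ∧ x ≠ v₅} => x.1 j.1, (memA' _).2 (hker1 x.1 ((memA _).1 x.2))⟩
      map_add' := fun a b => rfl
      map_smul' := fun c a => rfl
      invFun := fun y => ⟨gfun y.1, (memA _).2 (hker2 y.1 ((memA' _).1 y.2))⟩
      left_inv := fun x => Subtype.ext (hgf x.1 ((memA _).1 x.2))
      right_inv := fun y => Subtype.ext (hfg y.1) }
  exact E.finrank_eq
end

section
/- Let v be a cut-vertex of a connected signed graph Γ and Γ_1 a connected component of Γ − v. If η(Γ_1) = η(Γ_1 + v) − 1, then η(Γ) = η(Γ_1) + η(Γ − Γ_1), where Γ_1 + v is the subgraph of Γ induced on V(Γ_1) ∪ {v} and Γ − Γ_1 is the subgraph induced on V(Γ) \ V(Γ_1). -/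
/-!
Let `W = S ∪ {v}`. Since `v` separates `S` from the rest of the graph, `A` has no entries
between `S` and `V \ W`, and `A v v = 0`. Evaluation at `v` on `ker A_W` has kernel
`{x ∈ ker A_S | (A x) v = 0}`, so `η(W) ≤ η(S) + 1`, and equality forces two things: row `v`
of `A` vanishes on `ker A_S`, and `ker A_W` contains a vector with `v`-coordinate `1`, i.e. some
`y` supported on `S` with `A_S y = -A_{S,v}` and `(A y) v = 0`. The transvection
`w ↦ w + w v • y` then carries `ker A_S ⊕ ker A_{Sᶜ}` (extended by zero) onto `ker A`.
-/

open scoped Classical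

/-- The nullity of the signed subgraph induced on a set `S` of vertices,
given the full adjacency matrix `A`. -/
noncomputable def inducedNullity {V : Type*} [Fintype V]
    (A : Matrix V V ℝ) (S : Set V) : ℕ :=
  (A.submatrix (fun x : S => (x : V)) (fun x : S => (x : V))).nullity

open Module

theorem Submodule.finrank_le_finrank_inf_ker_add_one {K M : Type*} [Field K] [AddCommGroup M]
    [Module K M] [FiniteDimensional K M] (W : Submodule K M) (f : M →ₗ[K] K) :
    finrank K W ≤ finrank K ↥(W ⊓ LinearMap.ker f) + 1 := by
  have hsup := Submodule.finrank_sup_add_finrank_inf_eq W (LinearMap.ker f)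
  have hker := f.finrank_range_add_finrank_ker
  have hrange : finrank K (LinearMap.range f) ≤ 1 :=
    (Submodule.finrank_le _).trans (finrank_self K).le
  have htop := Submodule.finrank_le (W ⊔ LinearMap.ker f)
  omega

theorem Submodule.finrank_sup_eq_of_disjoint {K M : Type*} [Field K] [AddCommGroup M]
    [Module K M] [FiniteDimensional K M] {s t : Submodule K M} (h : Disjoint s t) :
    finrank K ↥(s ⊔ t) = finrank K s + finrank K t := by
  rw [← Submodule.finrank_sup_add_finrank_inf_eq, h.eq_bot, finrank_bot, add_zero]

namespace Matrix

def IsSeparatedBy {V K : Type*} [Zero K] (A : Matrix V V K) (S : Set V) (v : V) : Prop :=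
  ∀ i ∈ S, ∀ j ∉ S, j ≠ v → A i j = 0 ∧ A j i = 0

variable {V K : Type*} [Fintype V] [Field K]

/-- The kernel of the principal submatrix of `A` on `P`, realised inside `V → K` as vectors
supported on `P`. -/
def kerOn (A : Matrix V V K) (P : Set V) : Submodule K (V → K) where
  carrier := {w | (∀ i ∉ P, w i = 0) ∧ ∀ i ∈ P, (A *ᵥ w) i = 0}
  add_mem' {w w'} hw hw' :=
    ⟨fun i hi => by simp [hw.1 i hi, hw'.1 i hi],
      fun i hi => by simp [mulVec_add, hw.2 i hi, hw'.2 i hi]⟩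
  zero_mem' := ⟨fun _ _ => rfl, fun i _ => by simp⟩
  smul_mem' c w hw :=
    ⟨fun i hi => by simp [hw.1 i hi], fun i hi => by simp [mulVec_smul, hw.2 i hi]⟩

theorem mem_kerOn {A : Matrix V V K} {P : Set V} {w : V → K} :
    w ∈ A.kerOn P ↔ (∀ i ∉ P, w i = 0) ∧ ∀ i ∈ P, (A *ᵥ w) i = 0 :=
  Iff.rfl

theorem submatrix_mulVec_comp_val (A : Matrix V V K) {P : Set V} [Fintype P] {w : V → K}
    (hw : ∀ i ∉ P, w i = 0) :
    A.submatrix (fun x : P => (x : V)) (fun x : P => (x : V)) *ᵥ (fun x : P => w x) =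
      fun x : P => (A *ᵥ w) x := by
  ext i
  simp only [mulVec, dotProduct, submatrix_apply]
  have hout : ∑ j : {j // j ∉ P}, A i j * w j = 0 :=
    Finset.sum_eq_zero fun j _ => by rw [hw j j.2, mul_zero]
  rw [← Fintype.sum_subtype_add_sum_subtype (· ∈ P) (fun j => A i j * w j), hout, add_zero]
  convert rfl

theorem finrank_ker_submatrix_eq_finrank_kerOn (A : Matrix V V K) (P : Set V) [Fintype P] :
    finrank K (LinearMap.ker
      (A.submatrix (fun x : P => (x : V)) (fun x : P => (x : V))).mulVecLin) =
      finrank K (A.kerOn P) := by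
  let restrict : A.kerOn P →ₗ[K] LinearMap.ker
      (A.submatrix (fun x : P => (x : V)) (fun x : P => (x : V))).mulVecLin :=
    ((LinearMap.funLeft K K Subtype.val).comp (A.kerOn P).subtype).codRestrict _ fun w => by
      rw [LinearMap.mem_ker, mulVecLin_apply]
      ext i
      show (_ *ᵥ fun x : P => (w : V → K) x) i = 0
      rw [submatrix_mulVec_comp_val A w.2.1]
      exact w.2.2 i i.2
  refine (LinearEquiv.ofBijective restrict ⟨fun w w' h => ?_, fun x => ?_⟩).finrank_eq.symm
  · have hres : ∀ i : P, (w : V → K) i = (w' : V → K) i :=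
      fun i => congr_fun (congr_arg Subtype.val h) i
    ext i
    by_cases hi : i ∈ P
    · exact hres ⟨i, hi⟩
    · rw [w.2.1 i hi, w'.2.1 i hi]
  · let w : V → K := fun i => if hi : i ∈ P then (x : P → K) ⟨i, hi⟩ else 0
    have hw_out : ∀ i ∉ P, w i = 0 := fun i hi => dif_neg hi
    have hw_res : (fun i : P => w i) = x := funext fun i => dif_pos i.2
    have hw_mem : w ∈ A.kerOn P := by
      refine ⟨hw_out, fun i hi => ?_⟩
      have hx : _ *ᵥ (x : P → K) = 0 := x.2
      rw [← hw_res, submatrix_mulVec_comp_val A hw_out] at hx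
      exact congr_fun hx ⟨i, hi⟩
    exact ⟨⟨w, hw_mem⟩, Subtype.ext hw_res⟩

theorem kerOn_insert_inf_ker_proj (A : Matrix V V K) {P : Set V} {v : V} (hv : v ∉ P) :
    A.kerOn (insert v P) ⊓ LinearMap.ker (LinearMap.proj v) =
      A.kerOn P ⊓ LinearMap.ker (LinearMap.proj v ∘ₗ A.mulVecLin) := by
  ext w
  simp only [Submodule.mem_inf, mem_kerOn, LinearMap.mem_ker, LinearMap.proj_apply,
    LinearMap.comp_apply, mulVecLin_apply, Set.mem_insert_iff]
  grind

section InsertOne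

variable {A : Matrix V V K} {P : Set V} {v : V}

theorem mulVec_apply_eq_zero_of_finrank_kerOn_insert (hv : v ∉ P)
    (h : finrank K (A.kerOn (insert v P)) = finrank K (A.kerOn P) + 1) {x : V → K}
    (hx : x ∈ A.kerOn P) : (A *ᵥ x) v = 0 := by
  have hle := (A.kerOn (insert v P)).finrank_le_finrank_inf_ker_add_one (LinearMap.proj v)
  rw [kerOn_insert_inf_ker_proj A hv] at hle
  have hinf : A.kerOn P ⊓ LinearMap.ker (LinearMap.proj v ∘ₗ A.mulVecLin) ≤ A.kerOn P :=
    inf_le_left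
  have heq := Submodule.eq_of_le_of_finrank_eq hinf (by have := Submodule.finrank_mono hinf; omega)
  exact (inf_eq_left.mp heq hx : _)

theorem exists_mem_kerOn_insert_apply_eq_one (hv : v ∉ P)
    (h : finrank K (A.kerOn (insert v P)) = finrank K (A.kerOn P) + 1) :
    ∃ w ∈ A.kerOn (insert v P), w v = 1 := by
  obtain ⟨w, hw, hwv⟩ : ∃ w ∈ A.kerOn (insert v P), w v ≠ 0 := by
    by_contra! hall
    have hle : A.kerOn (insert v P) ≤
        A.kerOn P ⊓ LinearMap.ker (LinearMap.proj v ∘ₗ A.mulVecLin) :=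
      kerOn_insert_inf_ker_proj A hv ▸ fun w hw => ⟨hw, hall w hw⟩
    have := (Submodule.finrank_mono hle).trans (Submodule.finrank_mono inf_le_left)
    omega
  exact ⟨(w v)⁻¹ • w, Submodule.smul_mem _ _ hw, by simp [hwv]⟩

end InsertOne

theorem disjoint_kerOn_compl (A : Matrix V V K) (P : Set V) :
    Disjoint (A.kerOn P) (A.kerOn Pᶜ) := by
  refine Submodule.disjoint_def.mpr fun x hx hx' => funext fun i => ?_
  by_cases hi : i ∈ P
  · exact hx'.1 i (not_not.mpr hi)
  · exact hx.1 i hi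

section Separated

variable {A : Matrix V V K} {S : Set V} {v : V}

theorem IsSeparatedBy.mulVec_apply_eq_zero (hsep : A.IsSeparatedBy S v) {x : V → K}
    (hx : ∀ j ∉ S, x j = 0) {i : V} (hi : i ∉ S) (hiv : i ≠ v) : (A *ᵥ x) i = 0 := by
  refine Finset.sum_eq_zero fun j _ => show A i j * x j = 0 from ?_
  by_cases hj : j ∈ S
  · rw [(hsep j hj i hi hiv).2, zero_mul]
  · rw [hx j hj, mul_zero]

theorem IsSeparatedBy.mulVec_apply_eq (hsep : A.IsSeparatedBy S v) {z : V → K}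
    (hz : ∀ j ∈ S, z j = 0) {i : V} (hi : i ∈ S) : (A *ᵥ z) i = A i v * z v := by
  refine Finset.sum_eq_single v (fun j _ hjv => show A i j * z j = 0 from ?_) (by simp)
  by_cases hj : j ∈ S
  · rw [hz j hj, mul_zero]
  · rw [(hsep i hi j hj hjv).1, zero_mul]

theorem mulVec_transvection_proj (A : Matrix V V K) (v : V) (y w : V → K) :
    A *ᵥ LinearMap.transvection (LinearMap.proj v) y w = A *ᵥ w + w v • (A *ᵥ y) := by
  simp [LinearMap.transvection.apply, mulVec_add, mulVec_smul]

theorem kerOn_sup_kerOn_compl_le_comap (hv : v ∉ S) (hsep : A.IsSeparatedBy S v)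
    (hrow : ∀ x ∈ A.kerOn S, (A *ᵥ x) v = 0) {y : V → K} (hy : ∀ j ∉ S, y j = 0)
    (hyS : ∀ i ∈ S, (A *ᵥ y) i = -A i v) (hyv : (A *ᵥ y) v = 0) :
    A.kerOn S ⊔ A.kerOn Sᶜ ≤
      (LinearMap.ker A.mulVecLin).comap (LinearMap.transvection (LinearMap.proj v) y) := by
  refine sup_le (fun x hx => ?_) (fun z hz => ?_) <;>
    rw [Submodule.mem_comap, LinearMap.mem_ker, mulVecLin_apply, mulVec_transvection_proj] <;>
    ext i
  · rw [hx.1 v hv, zero_smul, add_zero]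
    by_cases hi : i ∈ S
    · exact hx.2 i hi
    by_cases hiv : i = v
    · exact hiv ▸ hrow x hx
    · exact hsep.mulVec_apply_eq_zero hx.1 hi hiv
  · have hz_out : ∀ j ∈ S, z j = 0 := fun j hj => hz.1 j (not_not.mpr hj)
    simp only [Pi.add_apply, Pi.smul_apply, smul_eq_mul, Pi.zero_apply]
    by_cases hi : i ∈ S
    · rw [hsep.mulVec_apply_eq hz_out hi, hyS i hi]
      ring
    by_cases hiv : i = v
    · rw [hiv, hz.2 v hv, hyv, mul_zero, add_zero]
    · rw [hz.2 i hi, hsep.mulVec_apply_eq_zero hy hi hiv, mul_zero, add_zero]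

theorem comap_le_kerOn_sup_kerOn_compl (hv : v ∉ S) (hsep : A.IsSeparatedBy S v)
    (hrow : ∀ x ∈ A.kerOn S, (A *ᵥ x) v = 0) {y : V → K} (hy : ∀ j ∉ S, y j = 0)
    (hyS : ∀ i ∈ S, (A *ᵥ y) i = -A i v) (hyv : (A *ᵥ y) v = 0) :
    (LinearMap.ker A.mulVecLin).comap (LinearMap.transvection (LinearMap.proj v) y) ≤
      A.kerOn S ⊔ A.kerOn Sᶜ := by
  intro w hw
  replace hw : ∀ i, (A *ᵥ w) i + w v * (A *ᵥ y) i = 0 := fun i => by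
    simpa [mulVec_transvection_proj] using congr_fun hw i
  set x := S.indicator w
  set z := Sᶜ.indicator w
  have hx_out : ∀ i ∉ S, x i = 0 := fun _ hi => Set.indicator_of_notMem hi w
  have hz_out : ∀ i ∈ S, z i = 0 := fun i hi => Set.indicator_of_notMem (not_not.mpr hi) w
  have hzv : z v = w v := Set.indicator_of_mem hv w
  have hAw : ∀ i, (A *ᵥ w) i = (A *ᵥ x) i + (A *ᵥ z) i := fun i => by
    rw [← Pi.add_apply, ← mulVec_add, Set.indicator_self_add_compl]
  have hx : x ∈ A.kerOn S := by
    refine ⟨hx_out, fun i hi => ?_⟩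
    have := hw i
    rw [hAw, hsep.mulVec_apply_eq hz_out hi, hyS i hi, hzv] at this
    linear_combination this
  have hz : z ∈ A.kerOn Sᶜ := by
    refine ⟨fun i hi => hz_out i (not_not.mp hi), fun i hi => ?_⟩
    have := hw i
    by_cases hiv : i = v
    · rw [hAw, hiv, hrow x hx, hyv] at this
      simpa [hiv] using this
    · rwa [hAw, hsep.mulVec_apply_eq_zero hx_out hi hiv, hsep.mulVec_apply_eq_zero hy hi hiv,
        mul_zero, add_zero, zero_add] at this
  rw [← Set.indicator_self_add_compl S w]
  exact Submodule.add_mem_sup hx hz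

theorem finrank_ker_mulVecLin_eq_of_finrank_kerOn_insert (hv : v ∉ S) (hvv : A v v = 0)
    (hsep : A.IsSeparatedBy S v)
    (h : finrank K (A.kerOn (insert v S)) = finrank K (A.kerOn S) + 1) :
    finrank K (LinearMap.ker A.mulVecLin) = finrank K (A.kerOn S) + finrank K (A.kerOn Sᶜ) := by
  have hrow := fun x => mulVec_apply_eq_zero_of_finrank_kerOn_insert (x := x) hv h
  obtain ⟨w, hw, hwv⟩ := exists_mem_kerOn_insert_apply_eq_one hv h
  set y := w - Pi.single v 1
  have hAy : ∀ i, (A *ᵥ y) i = (A *ᵥ w) i - A i v := by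
    simp [y, mulVec_sub]
  have hy : ∀ j ∉ S, y j = 0 := fun j hj => by
    by_cases hjv : j = v
    · simp [y, hjv, hwv]
    · simp [y, hjv, hw.1 j (by simp [hjv, hj])]
  have hyS : ∀ i ∈ S, (A *ᵥ y) i = -A i v := fun i hi => by
    rw [hAy, hw.2 i (Set.mem_insert_of_mem v hi), zero_sub]
  have hyv : (A *ᵥ y) v = 0 := by rw [hAy, hw.2 v (Set.mem_insert v S), hvv, sub_zero]
  have hT : LinearMap.proj (R := K) v y = 0 := hy v hv
  rw [← Submodule.finrank_sup_eq_of_disjoint (A.disjoint_kerOn_compl S),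
    (kerOn_sup_kerOn_compl_le_comap hv hsep hrow hy hyS hyv).antisymm
      (comap_le_kerOn_sup_kerOn_compl hv hsep hrow hy hyS hyv),
    ← LinearEquiv.transvection.coe_toLinearMap hT, Submodule.comap_equiv_eq_map_symm,
    LinearEquiv.finrank_map_eq]

end Separated

end Matrix

theorem inducedNullity_eq_finrank_kerOn {V : Type*} [Fintype V] (A : Matrix V V ℝ) (S : Set V) :
    inducedNullity A S = finrank ℝ (A.kerOn S) :=
  A.finrank_ker_submatrix_eq_finrank_kerOn S

theorem nullity_cut_vertex_one_general {V : Type*} [Fintype V]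
    (G : SimpleGraph V) (σ : V → V → ℝ)
    (A : Matrix V V ℝ)
    (hA : ∀ u v, A u v = if G.Adj u v then σ u v else 0)
    (v : V)
    (S : Set V) (hvS : v ∉ S)
    (hclosed : ∀ x ∈ S, ∀ y : V, G.Adj x y → y ≠ v → y ∈ S)
    (hη : inducedNullity A S + 1 = inducedNullity A (S ∪ {v})) :
    A.nullity = inducedNullity A S + inducedNullity A Sᶜ := by
  have hvv : A v v = 0 := by simp [hA]
  have hsep : A.IsSeparatedBy S v := fun i hi j hj hjv => by
    simp only [hA, ite_eq_right_iff]
    exact ⟨fun hij => absurd (hclosed i hi j hij hjv) hj,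
      fun hji => absurd (hclosed i hi j hji.symm hjv) hj⟩
  simp only [Matrix.nullity, inducedNullity_eq_finrank_kerOn, Set.union_singleton] at hη ⊢
  exact A.finrank_ker_mulVecLin_eq_of_finrank_kerOn_insert hvS hvv hsep hη.symm

/-- Let `v` be a cut-vertex of a connected signed graph `Γ`
and `Γ₁` (with vertex set `S`) a connected component of `Γ − v`.  If
`η(Γ₁) = η(Γ₁ + v) − 1`, then `η(Γ) = η(Γ₁) + η(Γ − Γ₁)`. -/
theorem nullity_cut_vertex_one {V : Type*} [Fintype V] [DecidableEq V]
    (G : SimpleGraph V) (σ : V → V → ℝ)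
    (hsym : ∀ u v, σ u v = σ v u)
    (hσ : ∀ u v, G.Adj u v → σ u v = 1 ∨ σ u v = -1)
    (A : Matrix V V ℝ)
    (hA : ∀ u v, A u v = if G.Adj u v then σ u v else 0)
    (hconn : G.Connected) (v : V)
    (hcut : ¬ (G.induce {x : V | x ≠ v}).Connected)
    (S : Set V) (hvS : v ∉ S) (hne : S.Nonempty)
    (hScon : (G.induce S).Connected)
    (hclosed : ∀ x ∈ S, ∀ y : V, G.Adj x y → y ≠ v → y ∈ S)
    (hη : inducedNullity A S + 1 = inducedNullity A (S ∪ {v})) :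
    A.nullity = inducedNullity A S + inducedNullity A Sᶜ :=
  nullity_cut_vertex_one_general G σ A hA v S hvS hclosed hη
end

section
/- Let v be a cut-vertex of a connected signed graph Γ and Γ_1 a connected component of Γ − v. If η(Γ_1) = η(Γ_1 + v) + 1, then η(Γ) = η(Γ − v) − 1. -/
open scoped Classical

/- Auxiliary definitions and lemmas -/

/-- Extension by zero from functions on a subset `P` to functions on `Q`. -/
noncomputable def extZeroTo {V : Type*} (P Q : Set V) : (↥P → ℝ) →ₗ[ℝ] (↥Q → ℝ) where
  toFun z x := if h : (x : V) ∈ P then z ⟨x, h⟩ else 0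
  map_add' a b := by
    funext x
    by_cases h : (x : V) ∈ P <;> simp [h]
  map_smul' r a := by
    funext x
    by_cases h : (x : V) ∈ P <;> simp [h]

@[simp] lemma extZeroTo_apply {V : Type*} (P Q : Set V) (z : ↥P → ℝ) (x : ↥Q) :
    extZeroTo P Q z x = if h : (x : V) ∈ P then z ⟨x, h⟩ else 0 := rfl

/-- Extension by zero from functions on a subset `P` to functions on `V`. -/
noncomputable def extZeroFull {V : Type*} (P : Set V) : (↥P → ℝ) →ₗ[ℝ] (V → ℝ) where
  toFun z x := if h : x ∈ P then z ⟨x, h⟩ else 0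
  map_add' a b := by
    funext x
    by_cases h : x ∈ P <;> simp [h]
  map_smul' r a := by
    funext x
    by_cases h : x ∈ P <;> simp [h]

@[simp] lemma extZeroFull_apply {V : Type*} (P : Set V) (z : ↥P → ℝ) (x : V) :
    extZeroFull P z x = if h : x ∈ P then z ⟨x, h⟩ else 0 := rfl

/-- Pairing with a fixed vector, as a linear functional. -/
noncomputable def pairF {W : Type*} [Fintype W] (c : W → ℝ) : (W → ℝ) →ₗ[ℝ] ℝ where
  toFun u := ∑ y, c y * u y
  map_add' a b := by simp [mul_add, Finset.sum_add_distrib]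
  map_smul' r a := by simp [Finset.mul_sum, mul_left_comm]

@[simp] lemma pairF_apply {W : Type*} [Fintype W] (c : W → ℝ) (u : W → ℝ) :
    pairF c u = ∑ y, c y * u y := rfl

lemma Matrix.nullity_congr {n : Type*} (i1 i2 : Fintype n) (A : Matrix n n ℝ) :
    @Matrix.nullity n i1 A = @Matrix.nullity n i2 A := by
  cases Subsingleton.elim i1 i2; rfl

lemma sum_coe_subset {V : Type*} [Fintype V] (P Q : Set V) [Fintype ↥P] [Fintype ↥Q]
    (hPQ : P ⊆ Q) (g : V → ℝ) (hg : ∀ y, y ∉ P → g y = 0) :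
    (∑ y : ↥Q, g ↑y) = ∑ y : ↥P, g ↑y := by
  rw [Finset.sum_set_coe, Finset.sum_set_coe]
  exact (Finset.sum_subset (Set.toFinset_subset_toFinset.mpr hPQ)
    (fun x _ hx => hg x (by simpa using hx))).symm

lemma sum_univ_coe {V : Type*} [Fintype V] (P : Set V) [Fintype ↥P] (g : V → ℝ)
    (hg : ∀ y, y ∉ P → g y = 0) :
    (∑ y : V, g y) = ∑ y : ↥P, g ↑y := by
  rw [Finset.sum_set_coe]
  exact (Finset.sum_subset (Finset.subset_univ _)
    (fun x _ hx => hg x (by simpa using hx))).symm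

/-- Let `v` be a cut-vertex of a connected signed graph `Γ`
and `Γ₁` (with vertex set `S`) a connected component of `Γ − v`.  If
`η(Γ₁) = η(Γ₁ + v) + 1`, then `η(Γ) = η(Γ − v) − 1`. -/
theorem nullity_cut_vertex_two {V : Type*} [Fintype V] [DecidableEq V]
    (G : SimpleGraph V) (σ : V → V → ℝ)
    (hsym : ∀ u v, σ u v = σ v u)
    (hσ : ∀ u v, G.Adj u v → σ u v = 1 ∨ σ u v = -1)
    (A : Matrix V V ℝ)
    (hA : ∀ u v, A u v = if G.Adj u v then σ u v else 0)
    (hconn : G.Connected) (v : V)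
    (hcut : ¬ (G.induce {x : V | x ≠ v}).Connected)
    (S : Set V) (hvS : v ∉ S) (hne : S.Nonempty)
    (hScon : (G.induce S).Connected)
    (hclosed : ∀ x ∈ S, ∀ y : V, G.Adj x y → y ≠ v → y ∈ S)
    (hη : inducedNullity A S = inducedNullity A (S ∪ {v}) + 1) :
    (A.nullity : ℤ) = inducedNullity A {x : V | x ≠ v} - 1 := by
  -- basic facts about A
  have hAsymm : ∀ x y, A x y = A y x := by
    intro x y
    rw [hA, hA]
    by_cases h : G.Adj x y
    · simp [h, h.symm, hsym x y]
    · have h' : ¬ G.Adj y x := fun hh => h hh.symm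
      simp [h, h']
  have hcross : ∀ x ∈ S, ∀ y, y ∉ S → y ≠ v → A x y = 0 := by
    intro x hx y hyS hyv
    rw [hA]
    by_cases h : G.Adj x y
    · exact absurd (hclosed x hx y h hyv) hyS
    · simp [h]
  set W : Set V := {x : V | x ≠ v} with hWdef
  have hSW : S ⊆ W := fun x hx => by
    simp only [hWdef, Set.mem_setOf_eq]
    exact fun e => hvS (e ▸ hx)
  set AS : Matrix ↥S ↥S ℝ :=
    A.submatrix (fun x : ↥S => (x : V)) (fun x : ↥S => (x : V)) with hASdef
  set AW : Matrix ↥W ↥W ℝ :=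
    A.submatrix (fun x : ↥W => (x : V)) (fun x : ↥W => (x : V)) with hAWdef
  set ASv : Matrix ↥(S ∪ {v}) ↥(S ∪ {v}) ℝ :=
    A.submatrix (fun x : ↥(S ∪ {v}) => (x : V)) (fun x : ↥(S ∪ {v}) => (x : V)) with hASvdef
  -- Step 1: obtain z in ker A_S not orthogonal to the column of v
  obtain ⟨z, hzker, hzP⟩ :
      ∃ z : ↥S → ℝ, AS.mulVec z = 0 ∧ (∑ s : ↥S, A v ↑s * z s) ≠ 0 := by
    by_contra hcon
    push_neg at hcon
    have hmap : ∀ z ∈ LinearMap.ker AS.mulVecLin,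
        extZeroTo S (S ∪ {v}) z ∈ LinearMap.ker ASv.mulVecLin := by
      intro z hz
      rw [LinearMap.mem_ker] at hz ⊢
      have hz' : AS.mulVec z = 0 := hz
      funext x
      have key : (ASv.mulVecLin (extZeroTo S (S ∪ {v}) z)) x
          = ∑ y : ↥S, A ↑x ↑y * z y := by
        calc (ASv.mulVecLin (extZeroTo S (S ∪ {v}) z)) x
            = ∑ y : ↥S, A ↑x ↑y * (if h : (y : V) ∈ S then z ⟨↑y, h⟩ else 0) := by
              exact sum_coe_subset S (S ∪ {v}) Set.subset_union_left
                (fun y => A ↑x y * (if h : y ∈ S then z ⟨y, h⟩ else 0))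
                (fun y hy => by simp [hy])
          _ = ∑ y : ↥S, A ↑x ↑y * z y := Finset.sum_congr rfl fun y _ => by simp
      rw [key]
      rcases x.2 with hxS | hxv
      · have := congrFun hz' ⟨↑x, hxS⟩
        simpa [Matrix.mulVec, dotProduct, hASdef] using this
      · have hxv' : (x : V) = v := hxv
        rw [hxv']
        exact hcon z hz'
    let L := (extZeroTo S (S ∪ {v})).restrict hmap
    have hLinj : Function.Injective L := by
      intro a b hab
      have h1 : extZeroTo S (S ∪ {v}) a.1 = extZeroTo S (S ∪ {v}) b.1 :=
        congrArg Subtype.val hab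
      apply Subtype.ext
      funext x
      have := congrFun h1 ⟨↑x, Set.mem_union_left _ x.2⟩
      simpa using this
    have hle := LinearMap.finrank_le_finrank_of_injective hLinj
    have hs1 : inducedNullity A S = AS.nullity := by
      unfold inducedNullity
      try rw [← hASdef]
      try exact Matrix.nullity_congr _ _ _
      try rfl
    have hs2 : inducedNullity A (S ∪ {v}) = ASv.nullity := by
      unfold inducedNullity
      try rw [← hASvdef]
      try exact Matrix.nullity_congr _ _ _
      try rfl
    rw [hs1, hs2] at hη
    unfold Matrix.nullity at hη
    omega
  -- the key pairing value
  set P : ℝ := ∑ s : ↥S, A v ↑s * z s with hPdef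
  -- Step 2: any kernel vector of A vanishes at v
  have K1 : ∀ f : V → ℝ, A.mulVec f = 0 → f v = 0 := by
    intro f hf
    have h0 : ∑ x : ↥S, z x * (A.mulVec f ↑x) = 0 := by
      simp [hf]
    have h1 : ∑ x : ↥S, z x * (A.mulVec f ↑x)
        = ∑ y : V, (∑ x : ↥S, z x * A ↑x y) * f y := by
      calc ∑ x : ↥S, z x * (A.mulVec f ↑x)
          = ∑ x : ↥S, ∑ y : V, z x * A ↑x y * f y := by
            simp [Matrix.mulVec, dotProduct, Finset.mul_sum, mul_assoc]
        _ = ∑ y : V, ∑ x : ↥S, z x * A ↑x y * f y := Finset.sum_comm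
        _ = ∑ y : V, (∑ x : ↥S, z x * A ↑x y) * f y := by
            simp [Finset.sum_mul]
    have hcol : ∀ y ∈ S, (∑ x : ↥S, z x * A ↑x y) = 0 := by
      intro y hy
      have hz := congrFun hzker ⟨y, hy⟩
      have h2 : (∑ x : ↥S, A y ↑x * z x) = 0 := by
        simpa [Matrix.mulVec, dotProduct, hASdef] using hz
      calc (∑ x : ↥S, z x * A ↑x y) = ∑ x : ↥S, A y ↑x * z x :=
            Finset.sum_congr rfl fun x _ => by rw [hAsymm]; ring
        _ = 0 := h2
    have h2 : ∑ y : V, (∑ x : ↥S, z x * A ↑x y) * f y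
        = (∑ x : ↥S, z x * A ↑x v) * f v := by
      apply Finset.sum_eq_single v
      · intro y _ hyv
        by_cases hyS : y ∈ S
        · rw [hcol y hyS, zero_mul]
        · have : ∀ x : ↥S, A ↑x y = 0 := fun x => hcross ↑x x.2 y hyS hyv
          simp [this]
      · intro h; exact absurd (Finset.mem_univ v) h
    have h3 : (∑ x : ↥S, z x * A ↑x v) = P := by
      rw [hPdef]
      exact Finset.sum_congr rfl fun x _ => by rw [hAsymm]; ring
    have h4 : P * f v = 0 := by rw [← h3, ← h2, ← h1, h0]
    rcases mul_eq_zero.mp h4 with h | h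
    · exact absurd h hzP
    · exact h
  -- row computations for extension from W
  have hrow : ∀ (u : ↥W → ℝ) (x : V),
      (∑ y : V, A x y * (extZeroFull W u) y) = ∑ y : ↥W, A x ↑y * u y := by
    intro u x
    calc (∑ y : V, A x y * (extZeroFull W u) y)
        = ∑ y : ↥W, A x ↑y * (extZeroFull W u) ↑y := by
          exact sum_univ_coe W (fun y => A x y * (extZeroFull W u) y)
            (fun y hy => by simp [hy])
      _ = ∑ y : ↥W, A x ↑y * u y := Finset.sum_congr rfl fun y _ => by simp
  -- restriction row computation: for f with f v = 0
  have hrow2 : ∀ (f : V → ℝ), f v = 0 → ∀ x : V,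
      (∑ y : V, A x y * f y) = ∑ y : ↥W, A x ↑y * f ↑y := by
    intro f hfv x
    exact sum_univ_coe W (fun y => A x y * f y)
      (fun y hy => by
        have : y = v := by simpa [hWdef] using hy
        simp [this, hfv])
  -- the linear functional
  set F : (↥W → ℝ) →ₗ[ℝ] ℝ := pairF (fun y : ↥W => A v ↑y) with hFdef
  set KW := LinearMap.ker AW.mulVecLin with hKWdef
  set KA := LinearMap.ker A.mulVecLin with hKAdef
  set Fhat : ↥KW →ₗ[ℝ] ℝ := F.comp KW.subtype with hFhatdef
  set KF := LinearMap.ker Fhat with hKFdef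
  -- forward membership
  have hmemW : ∀ f : V → ℝ, A.mulVec f = 0 →
      AW.mulVec (fun y : ↥W => f ↑y) = 0 := by
    intro f hf
    have hfv := K1 f hf
    funext x
    have h1 : (AW.mulVec (fun y : ↥W => f ↑y)) x = ∑ y : ↥W, A ↑x ↑y * f ↑y := by
      simp [Matrix.mulVec, dotProduct, hAWdef]
    rw [h1, ← hrow2 f hfv ↑x]
    have := congrFun hf ↑x
    simpa [Matrix.mulVec, dotProduct] using this
  have hmemF : ∀ f : V → ℝ, A.mulVec f = 0 →
      F (fun y : ↥W => f ↑y) = 0 := by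
    intro f hf
    have hfv := K1 f hf
    have h1 : F (fun y : ↥W => f ↑y) = ∑ y : ↥W, A v ↑y * f ↑y := by simp [hFdef]
    rw [h1, ← hrow2 f hfv v]
    have := congrFun hf v
    simpa [Matrix.mulVec, dotProduct] using this
  -- backward membership
  have hmemA : ∀ u : ↥W → ℝ, AW.mulVec u = 0 → F u = 0 →
      A.mulVec (extZeroFull W u) = 0 := by
    intro u hu hFu
    funext x
    have hx : (A.mulVec (extZeroFull W u)) x = ∑ y : ↥W, A x ↑y * u y := hrow u x
    rw [hx]
    by_cases hxv : x = v
    · rw [hxv]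
      simpa [hFdef] using hFu
    · have hxW : x ∈ W := hxv
      have := congrFun hu ⟨x, hxW⟩
      simpa [Matrix.mulVec, dotProduct, hAWdef] using this
  -- construct the two injections
  let ρ : (V → ℝ) →ₗ[ℝ] (↥W → ℝ) := LinearMap.funLeft ℝ ℝ (fun y : ↥W => (y : V))
  let Φ₂ : ↥KA →ₗ[ℝ] ↥KW :=
    (ρ.comp KA.subtype).codRestrict KW (by
      intro f
      rw [hKWdef, LinearMap.mem_ker]
      exact hmemW f.1 f.2)
  let Φ : ↥KA →ₗ[ℝ] ↥KF :=
    Φ₂.codRestrict KF (by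
      intro f
      rw [hKFdef, LinearMap.mem_ker]
      show F (ρ f.1) = 0
      exact hmemF f.1 f.2)
  have hΦinj : Function.Injective Φ := by
    intro a b hab
    have h1 : ρ a.1 = ρ b.1 :=
      congrArg Subtype.val (congrArg Subtype.val hab)
    apply Subtype.ext
    funext x
    by_cases hxv : x = v
    · rw [hxv, K1 a.1 a.2, K1 b.1 b.2]
    · exact congrFun h1 ⟨x, hxv⟩
  let Ψ₁ : ↥KF →ₗ[ℝ] (V → ℝ) :=
    (extZeroFull W).comp (KW.subtype.comp KF.subtype)
  let Ψ : ↥KF →ₗ[ℝ] ↥KA :=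
    Ψ₁.codRestrict KA (by
      intro u
      rw [hKAdef, LinearMap.mem_ker]
      exact hmemA u.1.1 u.1.2 u.2)
  have hΨinj : Function.Injective Ψ := by
    intro a b hab
    have h1 : extZeroFull W a.1.1 = extZeroFull W b.1.1 :=
      congrArg Subtype.val hab
    apply Subtype.ext
    apply Subtype.ext
    funext x
    have := congrFun h1 ↑x
    simpa [x.2] using this
  have e1 : Module.finrank ℝ ↥KA = Module.finrank ℝ ↥KF :=
    le_antisymm (LinearMap.finrank_le_finrank_of_injective hΦinj)
      (LinearMap.finrank_le_finrank_of_injective hΨinj)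
  -- range of Fhat has dimension 1
  have hzWmem : extZeroTo S W z ∈ KW := by
    rw [hKWdef, LinearMap.mem_ker]
    funext x
    have key : (AW.mulVecLin (extZeroTo S W z)) x = ∑ y : ↥S, A ↑x ↑y * z y := by
      calc (AW.mulVecLin (extZeroTo S W z)) x
          = ∑ y : ↥S, A ↑x ↑y * (if h : (y : V) ∈ S then z ⟨↑y, h⟩ else 0) := by
            exact sum_coe_subset S W hSW
              (fun y => A ↑x y * (if h : y ∈ S then z ⟨y, h⟩ else 0))
              (fun y hy => by simp [hy])
        _ = ∑ y : ↥S, A ↑x ↑y * z y := Finset.sum_congr rfl fun y _ => by simp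
    rw [key]
    by_cases hxS : (x : V) ∈ S
    · have := congrFun hzker ⟨↑x, hxS⟩
      simpa [Matrix.mulVec, dotProduct, hASdef] using this
    · have hxv : (x : V) ≠ v := x.2
      have : ∀ y : ↥S, A ↑x ↑y = 0 := fun y => by
        rw [hAsymm]; exact hcross ↑y y.2 ↑x hxS hxv
      simp [this]
  have hFz : Fhat ⟨extZeroTo S W z, hzWmem⟩ = P := by
    show F (extZeroTo S W z) = P
    calc F (extZeroTo S W z)
        = ∑ y : ↥S, A v ↑y * (if h : (y : V) ∈ S then z ⟨↑y, h⟩ else 0) := by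
          exact sum_coe_subset S W hSW
            (fun y => A v y * (if h : y ∈ S then z ⟨y, h⟩ else 0))
            (fun y hy => by simp [hy])
      _ = ∑ y : ↥S, A v ↑y * z y := Finset.sum_congr rfl fun y _ => by simp
      _ = P := hPdef.symm
  have hFhatne : Fhat ≠ 0 := by
    intro h
    rw [h] at hFz
    exact hzP (by simpa using hFz.symm)
  have hrange1 : Module.finrank ℝ ↥(LinearMap.range Fhat) = 1 := by
    have hle : Module.finrank ℝ ↥(LinearMap.range Fhat) ≤ 1 := by
      have := Submodule.finrank_le (LinearMap.range Fhat)
      simpa using this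
    have hne0 : LinearMap.range Fhat ≠ ⊥ := by
      intro h
      exact hFhatne (LinearMap.range_eq_bot.mp h)
    have hpos : 0 < Module.finrank ℝ ↥(LinearMap.range Fhat) := by
      rcases Submodule.ne_bot_iff _ |>.mp hne0 with ⟨x, hx, hxne⟩
      exact Module.finrank_pos_iff_exists_ne_zero.mpr ⟨⟨x, hx⟩, by simpa using hxne⟩
    omega
  have e2 := LinearMap.finrank_range_add_finrank_ker Fhat
  -- conclude
  have goal1 : A.nullity = Module.finrank ℝ ↥KA := rfl
  have goal2 : inducedNullity A W = Module.finrank ℝ ↥KW := by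
    have h : inducedNullity A W = AW.nullity := by
      unfold inducedNullity
      try rw [← hAWdef]
      try exact Matrix.nullity_congr _ _ _
      try rfl
    rw [h]
    rfl
  rw [goal2, goal1, e1]
  rw [hrange1] at e2
  rw [← hKFdef] at e2
  omega
end

section
/- Let Γ be obtained from a signed path P_m (m ≥ 2) and a disjoint signed graph H by identifying one endpoint of P_m with a vertex of H. Then for every real λ, the multiplicity of λ as an eigenvalue of A(Γ) is at most the multiplicity of λ as an eigenvalue of A(H) plus 1. -/
open scoped Classical

/-- The algebraic multiplicity of `lam` as an eigenvalue of a square real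
matrix: its multiplicity as a root of the characteristic polynomial
(`0` if `lam` is not an eigenvalue). -/
noncomputable def Matrix.eigMult {n : Type*} [Fintype n] [DecidableEq n]
    (A : Matrix n n ℝ) (lam : ℝ) : ℕ :=
  A.charpoly.rootMultiplicity lam

/-!
For a symmetric matrix the algebraic multiplicity of `λ` is the dimension of the `λ`-eigenspace.
Let `x` be a `λ`-eigenvector of `Γ` vanishing at the free end of the pendant path. Walking back
along the path, the eigenvalue equation at each path vertex expresses the entry of its
predecessor, times a nonzero sign, through entries already known to vanish; so `x` vanishes on
the whole path, and its restriction to `H` is a `λ`-eigenvector of `H`. Hence the hyperplane of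
eigenvectors vanishing at the free end embeds into the `λ`-eigenspace of `H`.
-/

open Module Module.End Matrix

theorem Matrix.IsSymm.eigMult_eq_finrank_eigenspace {n : Type*} [Fintype n] [DecidableEq n]
    {B : Matrix n n ℝ} (hB : B.IsSymm) (lam : ℝ) :
    B.eigMult lam = finrank ℝ (eigenspace (toLin' B) lam) := by
  let e : EuclideanSpace ℝ n ≃ₗ[ℝ] (n → ℝ) := WithLp.linearEquiv 2 ℝ (n → ℝ)
  have hE : eigenspace (toEuclideanLin B) lam =
      (eigenspace (toLin' B) lam).map e.symm.toLinearMap := by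
    ext x
    simp [Submodule.mem_map_equiv, toLpLin_apply, WithLp.ext_iff, e]
  have hsymm := isSymmetric_toEuclideanLin_iff.mpr (isHermitian_iff_isSymm.mpr hB)
  rw [← LinearEquiv.finrank_map_eq e.symm, ← hE,
    ← hsymm.isFinitelySemisimple.maxGenEigenspace_eq_eigenspace,
    LinearMap.finrank_maxGenEigenspace_eq, toEuclideanLin_eq_toLin_orthonormal,
    Matrix.charpoly_toLin, eigMult]

theorem Submodule.finrank_le_finrank_add_one_of_injOn_ker {K V L : Type*} [Field K]
    [AddCommGroup V] [Module K V] [FiniteDimensional K V]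
    [AddCommGroup L] [Module K L] [FiniteDimensional K L]
    (f : V →ₗ[K] K) (g : V →ₗ[K] L) {E : Submodule K V} {F : Submodule K L}
    (hmaps : ∀ x ∈ E, f x = 0 → g x ∈ F) (hinj : ∀ x ∈ E, f x = 0 → g x = 0 → x = 0) :
    finrank K E ≤ finrank K F + 1 := by
  set f' := f ∘ₗ E.subtype
  let g' : LinearMap.ker f' →ₗ[K] F :=
    (g ∘ₗ E.subtype ∘ₗ (LinearMap.ker f').subtype).codRestrict F fun x ↦ hmaps _ x.1.2 x.2
  have hg' : Function.Injective g' := by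
    rw [← LinearMap.ker_eq_bot, LinearMap.ker_eq_bot']
    intro x hx
    have := hinj x.1 x.1.2 x.2 (congrArg Subtype.val hx)
    ext
    simpa using this
  have hrange : finrank K (LinearMap.range f') ≤ 1 :=
    (Submodule.finrank_le _).trans (finrank_self K).le
  have := f'.finrank_range_add_finrank_ker
  have := LinearMap.finrank_le_finrank_of_injective hg'
  omega

open Sum

theorem Matrix.toBlocks₁₁_mulVec_comp_inl {l m n o R : Type*} [Fintype m] [Fintype n]
    [NonUnitalNonAssocSemiring R] (A : Matrix (l ⊕ o) (m ⊕ n) R) {x : m ⊕ n → R}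
    (hx : ∀ j, x (inr j) = 0) : A.toBlocks₁₁ *ᵥ (x ∘ inl) = (A *ᵥ x) ∘ inl := by
  have hx' : x ∘ inr = 0 := funext hx
  rw [← A.fromBlocks_toBlocks, fromBlocks_mulVec, hx', mulVec_zero, add_zero]
  rfl

theorem Matrix.finrank_eigenspace_le_finrank_eigenspace_toBlocks₁₁_add_one
    {K m n : Type*} [Field K] [Fintype m] [DecidableEq m] [Fintype n] [DecidableEq n]
    (A : Matrix (m ⊕ n) (m ⊕ n) K) (lam : K) (j₀ : n)
    (hvanish : ∀ x, A *ᵥ x = lam • x → x (inr j₀) = 0 → ∀ j, x (inr j) = 0) :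
    finrank K (eigenspace (toLin' A) lam) ≤
      finrank K (eigenspace (toLin' A.toBlocks₁₁) lam) + 1 := by
  refine Submodule.finrank_le_finrank_add_one_of_injOn_ker (LinearMap.proj (inr j₀))
    (LinearMap.funLeft K K inl) (fun x hx hj₀ ↦ ?_) (fun x hx hj₀ hinl ↦ ?_)
  all_goals rw [mem_eigenspace_iff, toLin'_apply] at hx
  · rw [mem_eigenspace_iff, toLin'_apply]
    change A.toBlocks₁₁ *ᵥ (x ∘ inl) = lam • (x ∘ inl)
    rw [toBlocks₁₁_mulVec_comp_inl A (hvanish x hx hj₀), hx]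
    rfl
  · ext (i | j)
    · exact congrFun hinl i
    · exact hvanish x hx hj₀ j

theorem apply_inr_eq_zero_of_mulVec_eq_smul {K W : Type*} [Field K] [Fintype W] {n : ℕ}
    {A : Matrix (W ⊕ Fin (n + 1)) (W ⊕ Fin (n + 1)) K}
    (hW : ∀ (i : Fin n) (w : W), A (inr i.succ) (inl w) = 0)
    (hbelow : ∀ (i : Fin n) (j : Fin (n + 1)), j < i.castSucc → A (inr i.succ) (inr j) = 0)
    (hsub : ∀ i : Fin n, A (inr i.succ) (inr i.castSucc) ≠ 0)
    {x : W ⊕ Fin (n + 1) → K} {lam : K} (hx : A *ᵥ x = lam • x)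
    (hlast : x (inr (Fin.last n)) = 0) (i : Fin (n + 1)) : x (inr i) = 0 := by
  suffices ∀ i : Fin (n + 1), ∀ j, i ≤ j → x (inr j) = 0 from this i i le_rfl
  intro i
  induction i using Fin.reverseInduction with
  | last => intro j hj; rw [Fin.last_le_iff.mp hj, hlast]
  | cast i ih =>
    intro j hj
    rcases hj.lt_or_eq with hj | rfl
    · exact ih j (Fin.castSucc_lt_iff_succ_le.mp hj)
    have hrow := congrFun hx (inr i.succ)
    rw [mulVec, dotProduct, Fintype.sum_sum_type,
      Finset.sum_eq_zero fun w _ ↦ by rw [hW, zero_mul], zero_add,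
      Finset.sum_eq_single i.castSucc, Pi.smul_apply, ih i.succ le_rfl, smul_zero] at hrow
    · exact (mul_eq_zero.mp hrow).resolve_left (hsub i)
    · intro j _ hji
      rcases lt_or_gt_of_ne hji with h | h
      · rw [hbelow i j h, zero_mul]
      · rw [ih j (Fin.castSucc_lt_iff_succ_le.mp h), mul_zero]
    · simp

theorem eigMult_pendant_path_general {W : Type*} [Fintype W] [DecidableEq W]
    (AH : Matrix W W ℝ)
    (k : ℕ) (hk : 1 ≤ k) (u : W)
    (τ : Fin k → ℝ) (hτ : ∀ i, τ i = 1 ∨ τ i = -1)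
    (A : Matrix (W ⊕ Fin k) (W ⊕ Fin k) ℝ)
    (hsymA : A.IsSymm)
    (hA1 : ∀ x y : W, A (Sum.inl x) (Sum.inl y) = AH x y)
    (hA2 : ∀ (x : W) (i : Fin k),
      A (Sum.inl x) (Sum.inr i) =
        if x = u ∧ (i : ℕ) = 0 then τ ⟨0, hk⟩ else 0)
    (hA3 : ∀ i j : Fin k,
      A (Sum.inr i) (Sum.inr j) =
        if (i : ℕ) + 1 = (j : ℕ) then τ j
        else if (j : ℕ) + 1 = (i : ℕ) then τ i else 0) :
    ∀ lam : ℝ, A.eigMult lam ≤ AH.eigMult lam + 1 := by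
  intro lam
  obtain ⟨n, rfl⟩ : ∃ n, k = n + 1 := ⟨k - 1, by omega⟩
  have hblock : A.toBlocks₁₁ = AH := Matrix.ext hA1
  have hsymAH : AH.IsSymm := IsSymm.ext fun x y ↦ by rw [← hA1, ← hA1, hsymA.apply]
  rw [hsymA.eigMult_eq_finrank_eigenspace, hsymAH.eigMult_eq_finrank_eigenspace, ← hblock]
  refine A.finrank_eigenspace_le_finrank_eigenspace_toBlocks₁₁_add_one lam (Fin.last n)
    fun x hx hlast ↦ apply_inr_eq_zero_of_mulVec_eq_smul (fun i w ↦ ?_) (fun i j hj ↦ ?_)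
      (fun i ↦ ?_) hx hlast
  · rw [hsymA.apply, hA2, if_neg fun h ↦ i.succ_ne_zero (Fin.ext h.2)]
  · rw [Fin.lt_def, Fin.val_castSucc] at hj
    rw [hA3, if_neg (by simp; omega), if_neg (by simp; omega)]
  · rw [hA3, if_neg (by simp; omega), if_pos (by simp)]
    rcases hτ i.succ with h | h <;> simp [h]

/-- Let `Γ` be obtained from a signed path `Pₘ` (`m ≥ 2`) and
a disjoint signed graph `H` by identifying one endpoint of the path with a
vertex `u` of `H` (so `k = m − 1 ≥ 1` new vertices are attached).  Then for
every real `λ`, `m(Γ, λ) ≤ m(H, λ) + 1`. -/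
theorem eigMult_pendant_path {W : Type*} [Fintype W] [DecidableEq W]
    (G : SimpleGraph W) (σ : W → W → ℝ)
    (hsym : ∀ x y, σ x y = σ y x)
    (hσ : ∀ x y, G.Adj x y → σ x y = 1 ∨ σ x y = -1)
    (AH : Matrix W W ℝ)
    (hAH : ∀ x y, AH x y = if G.Adj x y then σ x y else 0)
    (k : ℕ) (hk : 1 ≤ k) (u : W)
    (τ : Fin k → ℝ) (hτ : ∀ i, τ i = 1 ∨ τ i = -1)
    (A : Matrix (W ⊕ Fin k) (W ⊕ Fin k) ℝ)
    (hsymA : A.IsSymm)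
    (hA1 : ∀ x y : W, A (Sum.inl x) (Sum.inl y) = AH x y)
    (hA2 : ∀ (x : W) (i : Fin k),
      A (Sum.inl x) (Sum.inr i) =
        if x = u ∧ (i : ℕ) = 0 then τ ⟨0, hk⟩ else 0)
    (hA3 : ∀ i j : Fin k,
      A (Sum.inr i) (Sum.inr j) =
        if (i : ℕ) + 1 = (j : ℕ) then τ j
        else if (j : ℕ) + 1 = (i : ℕ) then τ i else 0) :
    ∀ lam : ℝ, A.eigMult lam ≤ AH.eigMult lam + 1 :=
  eigMult_pendant_path_general AH k hk u τ hτ A hsymA hA1 hA2 hA3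
end

section
/- Let H and K be disjoint signed graphs, and let Γ = (H, v; K, u) be their coalescence obtained by identifying a vertex v of H with a vertex u of K. Then η(Γ) ≤ η(K) + η(H − v) + 1. -/
/-!
In the blocks indexed by `H - v` and `K`, the adjacency matrix of the coalescence has an
upper-right block of rank at most one, because the identified vertex is the only vertex of `K`
with neighbours in `H - v`. For a block matrix `[[B, C], [D, E]]`, projecting the kernel onto the
first block of coordinates gives a map whose kernel embeds into `ker E` and whose image lies in
`B⁻¹(range C)`, a space of dimension at most `η(B) + rank C`.
-/

open scoped Classical

open Module

theorem LinearMap.finrank_comap_le {K V W : Type*} [DivisionRing K] [AddCommGroup V]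
    [Module K V] [AddCommGroup W] [Module K W] (f : V →ₗ[K] W) (p : Submodule K W)
    [FiniteDimensional K p] [FiniteDimensional K (LinearMap.ker f)] :
    finrank K (p.comap f) ≤ finrank K p + finrank K (LinearMap.ker f) := by
  have h := f.lift_rank_comap_le p
  simp only [← finrank_eq_rank, Cardinal.lift_natCast] at h
  exact_mod_cast h

namespace Matrix

variable {m n : Type*} [Fintype m] [Fintype n]

theorem mem_ker_fromBlocks_mulVecLin {R : Type*} [CommRing R] {B : Matrix m m R}
    {C : Matrix m n R} {D : Matrix n m R} {E : Matrix n n R} {z : m ⊕ n → R} :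
    z ∈ LinearMap.ker (fromBlocks B C D E).mulVecLin ↔
      B *ᵥ (z ∘ Sum.inl) + C *ᵥ (z ∘ Sum.inr) = 0 ∧
        D *ᵥ (z ∘ Sum.inl) + E *ᵥ (z ∘ Sum.inr) = 0 := by
  rw [LinearMap.mem_ker, mulVecLin_apply, fromBlocks_mulVec, ← Sum.elim_zero_zero,
    Sum.elim_eq_iff]

theorem nullity_fromBlocks_le (B : Matrix m m ℝ) (C : Matrix m n ℝ) (D : Matrix n m ℝ)
    (E : Matrix n n ℝ) : (fromBlocks B C D E).nullity ≤ B.nullity + E.nullity + C.rank := by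
  set N := LinearMap.ker (fromBlocks B C D E).mulVecLin
  change finrank ℝ N ≤ finrank ℝ (LinearMap.ker B.mulVecLin) +
    finrank ℝ (LinearMap.ker E.mulVecLin) + finrank ℝ (LinearMap.range C.mulVecLin)
  let π : N →ₗ[ℝ] m → ℝ := LinearMap.funLeft ℝ ℝ Sum.inl ∘ₗ N.subtype
  have hrange : LinearMap.range π ≤ (LinearMap.range C.mulVecLin).comap B.mulVecLin := by
    rintro _ ⟨⟨z, hz⟩, rfl⟩
    have hinl := (mem_ker_fromBlocks_mulVecLin.1 hz).1
    exact ⟨-(z ∘ Sum.inr), by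
      simp [π, LinearMap.funLeft, mulVec_neg, eq_neg_of_add_eq_zero_left hinl]⟩
  have hker : finrank ℝ (LinearMap.ker π) ≤ finrank ℝ (LinearMap.ker E.mulVecLin) := by
    let ρ : LinearMap.ker π →ₗ[ℝ] n → ℝ :=
      LinearMap.funLeft ℝ ℝ Sum.inr ∘ₗ N.subtype ∘ₗ (LinearMap.ker π).subtype
    have hρ : ∀ z, ρ z ∈ LinearMap.ker E.mulVecLin := by
      rintro ⟨⟨z, hz⟩, hπz⟩
      have hzl : z ∘ Sum.inl = 0 := hπz
      simpa [ρ, LinearMap.funLeft, hzl] using (mem_ker_fromBlocks_mulVecLin.1 hz).2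
    refine LinearMap.finrank_le_finrank_of_injective (f := ρ.codRestrict _ hρ) ?_
    rintro ⟨⟨z, hz⟩, hπz⟩ ⟨⟨z', hz'⟩, hπz'⟩ h
    have hl : z ∘ Sum.inl = z' ∘ Sum.inl := hπz.trans hπz'.symm
    have hr : z ∘ Sum.inr = z' ∘ Sum.inr := congrArg Subtype.val h
    simp only [Subtype.mk.injEq]
    ext (x | a)
    exacts [congrFun hl x, congrFun hr a]
  have hcomap := LinearMap.finrank_comap_le B.mulVecLin (LinearMap.range C.mulVecLin)
  have hrange_le := Submodule.finrank_mono hrange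
  have hrank_nullity := π.finrank_range_add_finrank_ker
  omega

end Matrix

theorem nullity_coalescence_general {W U : Type*} [Fintype W] [DecidableEq W]
    [Fintype U] [DecidableEq U]
    (AH : Matrix W W ℝ)
    (AK : Matrix U U ℝ)
    (v : W) (u : U)
    (A : Matrix ({x : W // x ≠ v} ⊕ U) ({x : W // x ≠ v} ⊕ U) ℝ)
    (hA1 : ∀ x y : {x : W // x ≠ v},
      A (Sum.inl x) (Sum.inl y) = AH (x : W) (y : W))
    (hA2 : ∀ a b : U, A (Sum.inr a) (Sum.inr b) = AK a b)
    (hA3 : ∀ (x : {x : W // x ≠ v}) (a : U),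
      A (Sum.inl x) (Sum.inr a) = if a = u then AH (x : W) v else 0) :
    A.nullity ≤
      AK.nullity +
        (AH.submatrix (fun x : {x : W // x ≠ v} => (x : W))
          (fun x : {x : W // x ≠ v} => (x : W))).nullity + 1 := by
  set B := AH.submatrix (fun x : {x : W // x ≠ v} => (x : W))
    (fun x : {x : W // x ≠ v} => (x : W))
  set C := Matrix.vecMulVec (fun x : {x : W // x ≠ v} => AH x v) (Pi.single u 1)
  have hblocks : A = Matrix.fromBlocks B C A.toBlocks₂₁ AK := by
    ext (x | a) (y | b) <;>
      simp [B, C, hA1, hA2, hA3, Matrix.toBlocks₂₁, Matrix.vecMulVec_apply, Pi.single_apply]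
  have hC : C.rank ≤ 1 := Matrix.rank_vecMulVec_le _ _
  calc A.nullity ≤ B.nullity + AK.nullity + C.rank :=
        (congrArg Matrix.nullity hblocks).trans_le (Matrix.nullity_fromBlocks_le _ _ _ _)
    _ ≤ AK.nullity + B.nullity + 1 := by omega

/-- Let `H` and `K` be disjoint signed graphs and let
`Γ = (H, v; K, u)` be their coalescence, obtained by identifying a vertex `v`
of `H` with a vertex `u` of `K`.  Then `η(Γ) ≤ η(K) + η(H − v) + 1`. -/
theorem nullity_coalescence {W U : Type*} [Fintype W] [DecidableEq W]
    [Fintype U] [DecidableEq U]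
    (GH : SimpleGraph W) (σH : W → W → ℝ)
    (hsymH : ∀ x y, σH x y = σH y x)
    (hσH : ∀ x y, GH.Adj x y → σH x y = 1 ∨ σH x y = -1)
    (AH : Matrix W W ℝ)
    (hAH : ∀ x y, AH x y = if GH.Adj x y then σH x y else 0)
    (GK : SimpleGraph U) (σK : U → U → ℝ)
    (hsymK : ∀ x y, σK x y = σK y x)
    (hσK : ∀ x y, GK.Adj x y → σK x y = 1 ∨ σK x y = -1)
    (AK : Matrix U U ℝ)
    (hAK : ∀ x y, AK x y = if GK.Adj x y then σK x y else 0)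
    (v : W) (u : U)
    (A : Matrix ({x : W // x ≠ v} ⊕ U) ({x : W // x ≠ v} ⊕ U) ℝ)
    (hsymA : A.IsSymm)
    (hA1 : ∀ x y : {x : W // x ≠ v},
      A (Sum.inl x) (Sum.inl y) = AH (x : W) (y : W))
    (hA2 : ∀ a b : U, A (Sum.inr a) (Sum.inr b) = AK a b)
    (hA3 : ∀ (x : {x : W // x ≠ v}) (a : U),
      A (Sum.inl x) (Sum.inr a) = if a = u then AH (x : W) v else 0) :
    A.nullity ≤
      AK.nullity +
        (AH.submatrix (fun x : {x : W // x ≠ v} => (x : W))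
          (fun x : {x : W // x ≠ v} => (x : W))).nullity + 1 :=
  nullity_coalescence_general AH AK v u A hA1 hA2 hA3
end

section
/- Let H and K be disjoint signed graphs and let Γ be obtained by connecting a vertex v of H and a vertex u of K with a signed path P_m (m ≥ 2), i.e., identifying one endpoint of P_m with v and the other with u. Then η(Γ) ≤ η(H) + η(K) + 1. -/
open scoped Classical

/-!
Let `c` be the neighbour of `u` on the bridge (the last internal vertex, or `v` when `m = 2`).
A null vector `x` of `Γ` with `x c = 0` restricts to a null vector of `K`, since `c` is the only
vertex outside `K` adjacent to `K`. If `x` also vanishes on `K`, the equations at the internal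
vertices of the bridge, which have degree two, propagate the zeros from `u` back to `v`, so `x`
restricts to a null vector of `H`; and a null vector vanishing on `H`, `K` and the bridge is zero.
The successive restrictions `x ↦ x c`, `x ↦ x|K`, `x ↦ x|H` thus give
`η(Γ) ≤ 1 + η(K) + η(H)`.
-/

open Module Matrix

theorem Submodule.finrank_le_finrank_inf_ker_add {K V X : Type*} [DivisionRing K]
    [AddCommGroup V] [Module K V] [FiniteDimensional K V] [AddCommGroup X] [Module K X]
    (S : Submodule K V) (f : V →ₗ[K] X) (T : Submodule K X) [FiniteDimensional K T]
    (hST : S.map f ≤ T) :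
    finrank K S ≤ finrank K ↥(S ⊓ LinearMap.ker f) + finrank K T := by
  have hker : finrank K (LinearMap.ker (f.domRestrict S)) = finrank K ↥(S ⊓ LinearMap.ker f) := by
    rw [← Submodule.finrank_map_subtype_eq, LinearMap.ker_domRestrict, Submodule.map_comap_subtype]
  have hrange : finrank K (LinearMap.range (f.domRestrict S)) ≤ finrank K T := by
    rw [LinearMap.range_domRestrict]; exact Submodule.finrank_mono hST
  have := (f.domRestrict S).finrank_range_add_finrank_ker
  omega

theorem Submodule.finrank_le_finrank_add_finrank_add_one {K V X Y : Type*} [DivisionRing K]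
    [AddCommGroup V] [Module K V] [FiniteDimensional K V] [AddCommGroup X] [Module K X]
    [AddCommGroup Y] [Module K Y] (N : Submodule K V) (φ : V →ₗ[K] K) (f : V →ₗ[K] X)
    (g : V →ₗ[K] Y) (S : Submodule K X) (T : Submodule K Y) [FiniteDimensional K S]
    [FiniteDimensional K T] (hf : ∀ x ∈ N, φ x = 0 → f x ∈ S)
    (hg : ∀ x ∈ N, φ x = 0 → f x = 0 → g x ∈ T)
    (hinj : ∀ x ∈ N, φ x = 0 → f x = 0 → g x = 0 → x = 0) :
    finrank K N ≤ finrank K T + finrank K S + 1 := by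
  have h1 := finrank_le_finrank_inf_ker_add N φ ⊤ le_top
  have h2 := finrank_le_finrank_inf_ker_add (N ⊓ LinearMap.ker φ) f S <| by
    rintro _ ⟨x, ⟨hx, hφx⟩, rfl⟩
    exact hf x hx hφx
  have h3 := finrank_le_finrank_inf_ker_add (N ⊓ LinearMap.ker φ ⊓ LinearMap.ker f) g T <| by
    rintro _ ⟨x, ⟨⟨hx, hφx⟩, hfx⟩, rfl⟩
    exact hg x hx hφx hfx
  have hbot : N ⊓ LinearMap.ker φ ⊓ LinearMap.ker f ⊓ LinearMap.ker g = ⊥ :=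
    eq_bot_iff.mpr fun x ⟨⟨⟨hx, hφx⟩, hfx⟩, hgx⟩ => hinj x hx hφx hfx hgx
  rw [finrank_top, finrank_self] at h1
  rw [hbot, finrank_bot] at h3
  omega

namespace Matrix

variable {ι κ R : Type*} [Fintype ι] [Fintype κ]

theorem submatrix_mulVec_eq_zero [NonUnitalNonAssocSemiring R] {A : Matrix ι ι R} {x : ι → R}
    (hx : A *ᵥ x = 0) {e : κ → ι} (he : e.Injective)
    (hout : ∀ i, ∀ s ∉ Set.range e, A (e i) s ≠ 0 → x s = 0) :
    A.submatrix e e *ᵥ (x ∘ e) = 0 := by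
  funext i
  refine (Fintype.sum_of_injective e he _ _ (fun s hs => ?_) (fun _ => rfl)).trans
    (congrFun hx (e i))
  exact mul_eq_zero_of_ne_zero_imp_eq_zero (hout i s hs)

theorem apply_eq_zero_of_mulVec_eq_zero [NonUnitalNonAssocSemiring R] [NoZeroDivisors R]
    {A : Matrix ι ι R} {x : ι → R} (hx : A *ᵥ x = 0) {r t : ι} (hrt : A r t ≠ 0)
    (hother : ∀ s ≠ t, A r s ≠ 0 → x s = 0) : x t = 0 := by
  have hrow : A r t * x t = 0 := by
    refine (Finset.sum_eq_single t (fun s _ hs => ?_) (by simp)).symm.trans (congrFun hx r)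
    exact mul_eq_zero_of_ne_zero_imp_eq_zero (hother s hs)
  exact (mul_eq_zero.mp hrow).resolve_left hrt

theorem apply_path_eq_zero_of_mulVec_eq_zero [NonUnitalNonAssocSemiring R] [NoZeroDivisors R]
    {A : Matrix ι ι R} {x : ι → R} (hx : A *ᵥ x = 0) (p : ℕ → ι) {n : ℕ}
    (hadj : ∀ i < n, A (p (i + 1)) (p i) ≠ 0)
    (hdeg : ∀ i < n, ∀ s, A (p (i + 1)) s ≠ 0 → s = p i ∨ s = p (i + 2))
    (hn : x (p n) = 0) (hn1 : x (p (n + 1)) = 0) {i : ℕ} (hi : i ≤ n + 1) : x (p i) = 0 := by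
  suffices h : ∀ i ≤ n, x (p i) = 0 ∧ x (p (i + 1)) = 0 by
    rcases hi.lt_or_eq with hi | rfl
    · exact (h i (by omega)).1
    · exact hn1
  intro i hi
  induction hi using Nat.decreasingInduction with
  | self => exact ⟨hn, hn1⟩
  | of_succ i hi ih =>
    refine ⟨apply_eq_zero_of_mulVec_eq_zero hx (hadj i hi) fun s hs hAs => ?_, ih.1⟩
    rcases hdeg i hi s hAs with rfl | rfl
    · exact absurd rfl hs
    · exact ih.2

end Matrix

section Bridge

variable {W U : Type*}

def bridgePath (v : W) (u : U) (k : ℕ) : ℕ → W ⊕ U ⊕ Fin k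
  | 0 => .inl v
  | i + 1 => if h : i < k then .inr (.inr ⟨i, h⟩) else .inr (.inl u)

theorem bridgePath_succ_of_lt (v : W) (u : U) {k i : ℕ} (hi : i < k) :
    bridgePath v u k (i + 1) = .inr (.inr ⟨i, hi⟩) := by
  simp [bridgePath, hi]

@[simp] theorem bridgePath_fin_succ (v : W) (u : U) {k : ℕ} (j : Fin k) :
    bridgePath v u k (j + 1) = .inr (.inr j) :=
  bridgePath_succ_of_lt v u j.2

@[simp] theorem bridgePath_succ_self (v : W) (u : U) (k : ℕ) :
    bridgePath v u k (k + 1) = .inr (.inl u) := by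
  simp [bridgePath]

theorem nullity_le_of_bridgePath [Fintype W] [Fintype U] {k : ℕ}
    (A : Matrix (W ⊕ U ⊕ Fin k) (W ⊕ U ⊕ Fin k) ℝ) (AH : Matrix W W ℝ) (AK : Matrix U U ℝ)
    (v : W) (u : U)
    (hAH : A.submatrix .inl .inl = AH)
    (hAK : A.submatrix (.inr ∘ .inl) (.inr ∘ .inl) = AK)
    (hH : ∀ y s, s ∉ Set.range .inl → A (.inl y) s ≠ 0 → s = bridgePath v u k 1)
    (hK : ∀ a s, s ∉ Set.range (.inr ∘ .inl) → A (.inr (.inl a)) s ≠ 0 →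
      s = bridgePath v u k k)
    (hadj : ∀ i < k, A (bridgePath v u k (i + 1)) (bridgePath v u k i) ≠ 0)
    (hdeg : ∀ i < k, ∀ s, A (bridgePath v u k (i + 1)) s ≠ 0 →
      s = bridgePath v u k i ∨ s = bridgePath v u k (i + 2)) :
    A.nullity ≤ AH.nullity + AK.nullity + 1 := by
  unfold Matrix.nullity
  set p := bridgePath v u k
  have hpath : ∀ x, A *ᵥ x = 0 → x (p k) = 0 → x (.inr (.inl u)) = 0 →
      ∀ i ≤ k + 1, x (p i) = 0 := fun x hx hxp hxu _ hi =>
    apply_path_eq_zero_of_mulVec_eq_zero hx p hadj hdeg hxp (by simpa [p] using hxu) hi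
  refine Submodule.finrank_le_finrank_add_finrank_add_one _ (LinearMap.proj (p k))
    (LinearMap.funLeft ℝ ℝ (Sum.inr ∘ Sum.inl)) (LinearMap.funLeft ℝ ℝ Sum.inl) _ _ ?_ ?_ ?_
  · intro x hx hxp
    exact hAK ▸ submatrix_mulVec_eq_zero hx (Sum.inr_injective.comp Sum.inl_injective)
      fun a s hs hAs => hK a s hs hAs ▸ hxp
  · intro x hx hxp hxK
    have hxp1 := hpath x hx hxp (congrFun hxK u) 1 (by omega)
    exact hAH ▸ submatrix_mulVec_eq_zero hx Sum.inl_injective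
      fun y s hs hAs => hH y s hs hAs ▸ hxp1
  · intro x hx hxp hxK hxH
    funext r
    rcases r with y | a | j
    · exact congrFun hxH y
    · exact congrFun hxK a
    · simpa [p] using hpath x hx hxp (congrFun hxK u) (j + 1) (by omega)

end Bridge

section SignedBridge

variable {W U : Type*} [DecidableEq W] {k : ℕ}
  {A : Matrix (W ⊕ U ⊕ Fin k) (W ⊕ U ⊕ Fin k) ℝ} {v : W} {u : U} {τ : Fin (k + 1) → ℝ}

theorem eq_bridgePath_one_of_apply_inl_ne_zero [DecidableEq U]
    (hA4 : ∀ (x : W) (i : Fin k),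
      A (Sum.inl x) (Sum.inr (Sum.inr i)) = if x = v ∧ (i : ℕ) = 0 then τ 0 else 0)
    (hA6 : ∀ (x : W) (a : U),
      A (Sum.inl x) (Sum.inr (Sum.inl a)) = if k = 0 ∧ x = v ∧ a = u then τ 0 else 0)
    (y : W) (s : W ⊕ U ⊕ Fin k) (hs : s ∉ Set.range Sum.inl) (hA : A (.inl y) s ≠ 0) :
    s = bridgePath v u k 1 := by
  rcases s with y' | a | j
  · exact absurd ⟨y', rfl⟩ hs
  · rw [hA6] at hA
    obtain ⟨rfl, -, rfl⟩ := (ite_ne_right_iff.mp hA).1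
    exact (bridgePath_succ_self v a 0).symm
  · rw [hA4] at hA
    obtain ⟨-, hj⟩ := (ite_ne_right_iff.mp hA).1
    rw [show 1 = (j : ℕ) + 1 by omega, bridgePath_fin_succ]

theorem eq_bridgePath_self_of_apply_inr_inl_ne_zero [DecidableEq U] (hsymA : A.IsSymm)
    (hA5 : ∀ (a : U) (i : Fin k), A (Sum.inr (Sum.inl a)) (Sum.inr (Sum.inr i)) =
        if a = u ∧ (i : ℕ) + 1 = k then τ (Fin.last k) else 0)
    (hA6 : ∀ (x : W) (a : U),
      A (Sum.inl x) (Sum.inr (Sum.inl a)) = if k = 0 ∧ x = v ∧ a = u then τ 0 else 0)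
    (a : U) (s : W ⊕ U ⊕ Fin k) (hs : s ∉ Set.range (Sum.inr ∘ Sum.inl))
    (hA : A (.inr (.inl a)) s ≠ 0) :
    s = bridgePath v u k k := by
  rcases s with y | b | j
  · rw [hsymA.apply, hA6] at hA
    obtain ⟨rfl, rfl, -⟩ := (ite_ne_right_iff.mp hA).1
    rfl
  · exact absurd ⟨b, rfl⟩ hs
  · rw [hA5] at hA
    obtain ⟨-, hjk⟩ := (ite_ne_right_iff.mp hA).1
    have := bridgePath_fin_succ v u j
    rw [hjk] at this
    exact this.symm

theorem apply_bridgePath_succ_ne_zero (hsymA : A.IsSymm) (hτ : ∀ i, τ i = 1 ∨ τ i = -1)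
    (hA3 : ∀ i j : Fin k, A (Sum.inr (Sum.inr i)) (Sum.inr (Sum.inr j)) =
        if (i : ℕ) + 1 = (j : ℕ) then τ j.castSucc
        else if (j : ℕ) + 1 = (i : ℕ) then τ i.castSucc else 0)
    (hA4 : ∀ (x : W) (i : Fin k),
      A (Sum.inl x) (Sum.inr (Sum.inr i)) = if x = v ∧ (i : ℕ) = 0 then τ 0 else 0)
    (i : ℕ) (hi : i < k) : A (bridgePath v u k (i + 1)) (bridgePath v u k i) ≠ 0 := by
  have hτ0 : ∀ i, τ i ≠ 0 := fun i => by rcases hτ i with h | h <;> simp [h]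
  rw [bridgePath_succ_of_lt v u hi]
  rcases i with _ | i
  · simpa [bridgePath, hsymA.apply, hA4] using hτ0 0
  · rw [bridgePath_succ_of_lt v u (Nat.lt_of_succ_lt hi), hA3, Fin.val_mk, Fin.val_mk,
      if_neg (by omega), if_pos rfl]
    exact hτ0 _

theorem eq_bridgePath_of_apply_bridgePath_succ_ne_zero [DecidableEq U] (hsymA : A.IsSymm)
    (hA3 : ∀ i j : Fin k, A (Sum.inr (Sum.inr i)) (Sum.inr (Sum.inr j)) =
        if (i : ℕ) + 1 = (j : ℕ) then τ j.castSucc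
        else if (j : ℕ) + 1 = (i : ℕ) then τ i.castSucc else 0)
    (hA4 : ∀ (x : W) (i : Fin k),
      A (Sum.inl x) (Sum.inr (Sum.inr i)) = if x = v ∧ (i : ℕ) = 0 then τ 0 else 0)
    (hA5 : ∀ (a : U) (i : Fin k), A (Sum.inr (Sum.inl a)) (Sum.inr (Sum.inr i)) =
        if a = u ∧ (i : ℕ) + 1 = k then τ (Fin.last k) else 0)
    (i : ℕ) (hi : i < k) (s : W ⊕ U ⊕ Fin k) (hA : A (bridgePath v u k (i + 1)) s ≠ 0) :
    s = bridgePath v u k i ∨ s = bridgePath v u k (i + 2) := by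
  rw [bridgePath_succ_of_lt v u hi] at hA
  rcases s with y | a | j
  · rw [hsymA.apply, hA4] at hA
    obtain ⟨rfl, hi0 : i = 0⟩ := (ite_ne_right_iff.mp hA).1
    exact .inl (by rw [hi0]; rfl)
  · rw [hsymA.apply, hA5] at hA
    obtain ⟨rfl, hik : i + 1 = k⟩ := (ite_ne_right_iff.mp hA).1
    exact .inr (by rw [← bridgePath_succ_self v a k, ← hik])
  · rw [hA3, Fin.val_mk] at hA
    split_ifs at hA with h1 h2
    · exact .inr (by rw [show i + 2 = (j : ℕ) + 1 by omega, bridgePath_fin_succ])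
    · exact .inl (by rw [show i = (j : ℕ) + 1 by omega, bridgePath_fin_succ])
    · exact absurd rfl hA

end SignedBridge

theorem nullity_bridge_path_general {W U : Type*} [Fintype W] [DecidableEq W]
    [Fintype U] [DecidableEq U]
    (AH : Matrix W W ℝ)
    (AK : Matrix U U ℝ)
    (v : W) (u : U) (k : ℕ)
    (τ : Fin (k + 1) → ℝ) (hτ : ∀ i, τ i = 1 ∨ τ i = -1)
    (A : Matrix (W ⊕ U ⊕ Fin k) (W ⊕ U ⊕ Fin k) ℝ)
    (hsymA : A.IsSymm)
    (hA1 : ∀ x y : W, A (Sum.inl x) (Sum.inl y) = AH x y)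
    (hA2 : ∀ a b : U, A (Sum.inr (Sum.inl a)) (Sum.inr (Sum.inl b)) = AK a b)
    (hA3 : ∀ i j : Fin k,
      A (Sum.inr (Sum.inr i)) (Sum.inr (Sum.inr j)) =
        if (i : ℕ) + 1 = (j : ℕ) then τ j.castSucc
        else if (j : ℕ) + 1 = (i : ℕ) then τ i.castSucc else 0)
    (hA4 : ∀ (x : W) (i : Fin k),
      A (Sum.inl x) (Sum.inr (Sum.inr i)) =
        if x = v ∧ (i : ℕ) = 0 then τ 0 else 0)
    (hA5 : ∀ (a : U) (i : Fin k),
      A (Sum.inr (Sum.inl a)) (Sum.inr (Sum.inr i)) =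
        if a = u ∧ (i : ℕ) + 1 = k then τ (Fin.last k) else 0)
    (hA6 : ∀ (x : W) (a : U),
      A (Sum.inl x) (Sum.inr (Sum.inl a)) =
        if k = 0 ∧ x = v ∧ a = u then τ 0 else 0) :
    A.nullity ≤ AH.nullity + AK.nullity + 1 :=
  nullity_le_of_bridgePath A AH AK v u (Matrix.ext hA1) (Matrix.ext hA2)
    (eq_bridgePath_one_of_apply_inl_ne_zero hA4 hA6)
    (eq_bridgePath_self_of_apply_inr_inl_ne_zero hsymA hA5 hA6)
    (apply_bridgePath_succ_ne_zero hsymA hτ hA3 hA4)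
    (eq_bridgePath_of_apply_bridgePath_succ_ne_zero hsymA hA3 hA4 hA5)

/-- Let `H` and `K` be disjoint signed graphs and let `Γ` be
obtained by connecting a vertex `v` of `H` and a vertex `u` of `K` by a signed
path `Pₘ` with `m = k + 2 ≥ 2` vertices (so with `k ≥ 0` internal vertices and
`k + 1` signed edges `τ 0, …, τ k`).  Then `η(Γ) ≤ η(H) + η(K) + 1`. -/
theorem nullity_bridge_path {W U : Type*} [Fintype W] [DecidableEq W]
    [Fintype U] [DecidableEq U]
    (GH : SimpleGraph W) (σH : W → W → ℝ)
    (hsymH : ∀ x y, σH x y = σH y x)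
    (hσH : ∀ x y, GH.Adj x y → σH x y = 1 ∨ σH x y = -1)
    (AH : Matrix W W ℝ)
    (hAH : ∀ x y, AH x y = if GH.Adj x y then σH x y else 0)
    (GK : SimpleGraph U) (σK : U → U → ℝ)
    (hsymK : ∀ x y, σK x y = σK y x)
    (hσK : ∀ x y, GK.Adj x y → σK x y = 1 ∨ σK x y = -1)
    (AK : Matrix U U ℝ)
    (hAK : ∀ x y, AK x y = if GK.Adj x y then σK x y else 0)
    (v : W) (u : U) (k : ℕ)
    (τ : Fin (k + 1) → ℝ) (hτ : ∀ i, τ i = 1 ∨ τ i = -1)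
    (A : Matrix (W ⊕ U ⊕ Fin k) (W ⊕ U ⊕ Fin k) ℝ)
    (hsymA : A.IsSymm)
    (hA1 : ∀ x y : W, A (Sum.inl x) (Sum.inl y) = AH x y)
    (hA2 : ∀ a b : U, A (Sum.inr (Sum.inl a)) (Sum.inr (Sum.inl b)) = AK a b)
    (hA3 : ∀ i j : Fin k,
      A (Sum.inr (Sum.inr i)) (Sum.inr (Sum.inr j)) =
        if (i : ℕ) + 1 = (j : ℕ) then τ j.castSucc
        else if (j : ℕ) + 1 = (i : ℕ) then τ i.castSucc else 0)
    (hA4 : ∀ (x : W) (i : Fin k),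
      A (Sum.inl x) (Sum.inr (Sum.inr i)) =
        if x = v ∧ (i : ℕ) = 0 then τ 0 else 0)
    (hA5 : ∀ (a : U) (i : Fin k),
      A (Sum.inr (Sum.inl a)) (Sum.inr (Sum.inr i)) =
        if a = u ∧ (i : ℕ) + 1 = k then τ (Fin.last k) else 0)
    (hA6 : ∀ (x : W) (a : U),
      A (Sum.inl x) (Sum.inr (Sum.inl a)) =
        if k = 0 ∧ x = v ∧ a = u then τ 0 else 0) :
    A.nullity ≤ AH.nullity + AK.nullity + 1 :=
  nullity_bridge_path_general AH AK v u k τ hτ A hsymA hA1 hA2 hA3 hA4 hA5 hA6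
end

section
/- Let Γ = ∞(l, k, 1) be the signed ∞-graph obtained from two vertex-disjoint signed cycles C_l and C_k by identifying one vertex of each (so they share exactly one common vertex), where both C_l and C_k have nullity 2. Then η(Γ) = 3. -/
open scoped Classical

/-!
Write `t` for the value of a vector `x` at the common vertex. At a vertex of the first cycle,
the row of `A *ᵥ x = 0` reads `a i * y i + a (i + 1) * y (i + 2) = 0`, where `y` lists the values
of `x` along the closed walk centre, `c₀`, …, `c_{p-1}`, centre. This recurrence determines `y`
from `y 0 = t` and `y 1 = x c₀`, and likewise on the second cycle, so a kernel vector is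
determined by three numbers. Conversely, the recurrence started at arbitrary `(t, s)` reaches the
value `(-1) ^ (l / 2) * (∏ signs) * t` after a full turn around a cycle of even length `l`; the
nullity-two condition says that this is `t`, and it also makes the two edges at the centre
contribute `a 0 * s - a 0 * s = 0` to the centre row. Hence every triple extends, and the
kernel is `ℝ³`.
-/

open Finset Matrix

/-- The values along the closed walk centre, `v 0`, …, `v (p - 1)`, centre, where `c` is the
value at the centre. -/
def loopValues {X : Type*} {p : ℕ} (c : X) (v : Fin p → X) (n : ℕ) : X :=
  if h : 0 < n ∧ n ≤ p then v ⟨n - 1, by omega⟩ else c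

section loopValues

variable {X : Type*} {p : ℕ} (c : X) (v : Fin p → X)

theorem loopValues_zero : loopValues c v 0 = c := rfl

theorem loopValues_one (hp : 0 < p) : loopValues c v 1 = v ⟨0, hp⟩ :=
  dif_pos ⟨one_pos, hp⟩

theorem loopValues_val_succ (j : Fin p) : loopValues c v (j + 1) = v j := by
  simp [loopValues, j.isLt]

theorem loopValues_self_add_one : loopValues c v (p + 1) = c := by
  simp [loopValues]

theorem loopValues_eq {y : ℕ → X} (h0 : y 0 = c) (hlast : y (p + 1) = c)
    (hv : ∀ i, v i = y (i + 1)) : ∀ n ≤ p + 1, loopValues c v n = y n := by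
  intro n hn
  unfold loopValues
  split_ifs with h
  · rw [hv, Nat.sub_add_cancel h.1]
  · rcases Nat.eq_zero_or_pos n with rfl | hpos
    · exact h0.symm
    · rw [show n = p + 1 by omega, hlast]

end loopValues

variable {R : Type*} [CommRing R]

def pathSolution (a : ℕ → R) (t s : R) : ℕ → R
  | 0 => t
  | 1 => s
  | n + 2 => -(a n * a (n + 1)) * pathSolution a t s n

section pathSolution

variable {a : ℕ → R} {t s : R}

theorem pathSolution_recurrence (ha : ∀ i, a i ^ 2 = 1) (n : ℕ) :
    a n * pathSolution a t s n + a (n + 1) * pathSolution a t s (n + 2) = 0 := by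
  rw [pathSolution]
  linear_combination (-(a n * pathSolution a t s n)) * ha (n + 1)

theorem eq_pathSolution_of_recurrence {y : ℕ → R} {p : ℕ} (ha : ∀ i, a i ^ 2 = 1)
    (hy : ∀ i < p, a i * y i + a (i + 1) * y (i + 2) = 0) :
    ∀ n ≤ p + 1, y n = pathSolution a (y 0) (y 1) n
  | 0, _ => rfl
  | 1, _ => rfl
  | n + 2, hn => by
    rw [pathSolution, ← eq_pathSolution_of_recurrence ha hy n (by omega)]
    linear_combination a (n + 1) * hy n (by omega) - y (n + 2) * ha (n + 1)

theorem pathSolution_two_mul (j : ℕ) :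
    pathSolution a t s (2 * j) = (-1) ^ j * (∏ i ∈ range (2 * j), a i) * t := by
  induction j with
  | zero => simp [pathSolution]
  | succ j ih =>
    rw [show 2 * (j + 1) = 2 * j + 2 by ring, pathSolution, ih, prod_range_succ,
      prod_range_succ, pow_succ]
    ring

theorem pathSolution_two_mul_add_one (j : ℕ) :
    pathSolution a t s (2 * j + 1) = (-1) ^ j * (∏ i ∈ Ico 1 (2 * j + 1), a i) * s := by
  induction j with
  | zero => simp [pathSolution]
  | succ j ih =>
    have hprod : ∏ i ∈ Ico 1 (2 * (j + 1) + 1), a i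
        = (∏ i ∈ Ico 1 (2 * j + 1), a i) * a (2 * j + 1) * a (2 * j + 2) := by
      rw [show 2 * (j + 1) + 1 = 2 * j + 1 + 1 + 1 by ring, prod_Ico_succ_top (by omega),
        prod_Ico_succ_top (by omega)]
    rw [hprod, show 2 * (j + 1) + 1 = 2 * j + 1 + 2 by ring, pathSolution, ih, pow_succ]
    ring

variable {m : ℕ}

theorem pathSolution_cycle_closes (hc : (-1) ^ (m + 1) * ∏ i ∈ range (2 * m + 2), a i = 1) :
    pathSolution a t s (2 * m + 2) = t := by
  rw [show 2 * m + 2 = 2 * (m + 1) by ring] at hc ⊢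
  rw [pathSolution_two_mul, hc, one_mul]

theorem pathSolution_centre_balanced (ha : ∀ i, a i ^ 2 = 1)
    (hc : (-1) ^ (m + 1) * ∏ i ∈ range (2 * m + 2), a i = 1) :
    a 0 * pathSolution a t s 1 + a (2 * m + 1) * pathSolution a t s (2 * m + 1) = 0 := by
  rw [prod_range_succ, range_eq_Ico, prod_eq_prod_Ico_succ_bot (by omega)] at hc
  rw [pathSolution_two_mul_add_one, show pathSolution a t s 1 = s from rfl]
  linear_combination (-(s * a 0)) * hc
    - (s * (-1) ^ m * (∏ i ∈ Ico 1 (2 * m + 1), a i) * a (2 * m + 1)) * ha 0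

end pathSolution

def signedPathMatrix (a : ℕ → R) (p : ℕ) : Matrix (Fin p) (Fin p) R :=
  Matrix.of fun i j => if (i : ℕ) + 1 = j then a j else if (j : ℕ) + 1 = i then a i else 0

def pathEndWeights (a : ℕ → R) (p : ℕ) (i : Fin p) : R :=
  if (i : ℕ) = 0 then a 0 else if (i : ℕ) + 1 = p then a p else 0

section signedPath

variable {a : ℕ → R} {p : ℕ} (c : R) (v : Fin p → R)

theorem sum_mul_eq_sum_range_loopValues (f : ℕ → R) :
    ∑ j : Fin p, f j * v j = ∑ j ∈ range p, f j * loopValues c v (j + 1) := by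
  simp only [← loopValues_val_succ c v]
  exact Fin.sum_univ_eq_sum_range (fun j => f j * loopValues c v (j + 1)) p

theorem pathEndWeights_mul_add_mulVec (hp : 2 ≤ p) (i : Fin p) :
    pathEndWeights a p i * c + (signedPathMatrix a p *ᵥ v) i
      = a i * loopValues c v i + a (i + 1) * loopValues c v (i + 2) := by
  obtain ⟨i, hi⟩ := i
  have hsplit : ∀ j, (if i + 1 = j then a j else if j + 1 = i then a i else 0)
        * loopValues c v (j + 1) =
      (if i + 1 = j then a (i + 1) * loopValues c v (i + 2) else 0)
        + (if j + 1 = i then a i * loopValues c v i else 0) := by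
    intro j
    split_ifs <;> subst_vars <;> first | omega | ring
  have hprev : ∑ j ∈ range p, (if j + 1 = i then a i * loopValues c v i else 0)
      = if i = 0 then 0 else a i * loopValues c v i := by
    rcases i with _ | i
    · simp
    · simp [sum_ite_eq', show i < p by omega]
  simp only [mulVec, dotProduct, signedPathMatrix, of_apply]
  rw [sum_mul_eq_sum_range_loopValues c v
      (fun j => if i + 1 = j then a j else if j + 1 = i then a i else 0),
    sum_congr rfl fun j _ => hsplit j, sum_add_distrib, sum_ite_eq, hprev]
  simp only [pathEndWeights, mem_range]
  split_ifs <;> subst_vars <;> (try simp only [loopValues_zero, loopValues_self_add_one]) <;>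
    first | omega | ring

theorem pathEndWeights_dotProduct (hp : 2 ≤ p) :
    pathEndWeights a p ⬝ᵥ v = a 0 * loopValues c v 1 + a p * loopValues c v p := by
  simp only [dotProduct, pathEndWeights]
  rw [sum_mul_eq_sum_range_loopValues c v
      (fun j => if j = 0 then a 0 else if j + 1 = p then a p else 0),
    sum_eq_add 0 (p - 1) (by omega) (fun j _ hj => by simp [hj.1, show j + 1 ≠ p by omega])
      (by simp; omega) (by simp; omega)]
  simp [show p - 1 ≠ 0 by omega, show p - 1 + 1 = p by omega]

end signedPath

def infinityGraphMatrix (a b : ℕ → R) (p q : ℕ) :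
    Matrix (Unit ⊕ Fin p ⊕ Fin q) (Unit ⊕ Fin p ⊕ Fin q) R :=
  fromBlocks 0 (replicateRow Unit (Sum.elim (pathEndWeights a p) (pathEndWeights b q)))
    (replicateCol Unit (Sum.elim (pathEndWeights a p) (pathEndWeights b q)))
    (fromBlocks (signedPathMatrix a p) 0 0 (signedPathMatrix b q))

def infinityGraphVector (a b : ℕ → R) (p q : ℕ) (t s u : R) :
    Unit ⊕ Fin p ⊕ Fin q → R :=
  Sum.elim (fun _ => t)
    (Sum.elim (fun i => pathSolution a t s (i + 1)) (fun j => pathSolution b t u (j + 1)))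

section infinityGraph

variable {a b : ℕ → R} {p q : ℕ} (x : Unit ⊕ Fin p ⊕ Fin q → R)

theorem infinityGraphMatrix_mulVec_inl (hp : 2 ≤ p) (hq : 2 ≤ q) :
    (infinityGraphMatrix a b p q *ᵥ x) (.inl ())
      = (a 0 * loopValues (x (.inl ())) (fun i => x (.inr (.inl i))) 1
          + a p * loopValues (x (.inl ())) (fun i => x (.inr (.inl i))) p)
        + (b 0 * loopValues (x (.inl ())) (fun j => x (.inr (.inr j))) 1
          + b q * loopValues (x (.inl ())) (fun j => x (.inr (.inr j))) q) := by
  rw [← pathEndWeights_dotProduct _ _ hp, ← pathEndWeights_dotProduct _ _ hq]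
  simp [infinityGraphMatrix, fromBlocks_mulVec, replicateRow_mulVec_eq_const, dotProduct,
    Fintype.sum_sum_type]

theorem infinityGraphMatrix_mulVec_inr_inl (hp : 2 ≤ p) (i : Fin p) :
    (infinityGraphMatrix a b p q *ᵥ x) (.inr (.inl i))
      = a i * loopValues (x (.inl ())) (fun i => x (.inr (.inl i))) i
        + a (i + 1) * loopValues (x (.inl ())) (fun i => x (.inr (.inl i))) (i + 2) := by
  rw [← pathEndWeights_mul_add_mulVec _ _ hp]
  simp [infinityGraphMatrix, mulVec, dotProduct]

theorem infinityGraphMatrix_mulVec_inr_inr (hq : 2 ≤ q) (j : Fin q) :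
    (infinityGraphMatrix a b p q *ᵥ x) (.inr (.inr j))
      = b j * loopValues (x (.inl ())) (fun j => x (.inr (.inr j))) j
        + b (j + 1) * loopValues (x (.inl ())) (fun j => x (.inr (.inr j))) (j + 2) := by
  rw [← pathEndWeights_mul_add_mulVec _ _ hq]
  simp [infinityGraphMatrix, mulVec, dotProduct]

theorem eq_infinityGraphVector_of_mulVec_eq_zero (hp : 2 ≤ p) (hq : 2 ≤ q)
    (ha : ∀ i, a i ^ 2 = 1) (hb : ∀ i, b i ^ 2 = 1) {x : Unit ⊕ Fin p ⊕ Fin q → R}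
    (hx : infinityGraphMatrix a b p q *ᵥ x = 0) :
    x = infinityGraphVector a b p q (x (.inl ())) (x (.inr (.inl ⟨0, by omega⟩)))
      (x (.inr (.inr ⟨0, by omega⟩))) := by
  have hy := eq_pathSolution_of_recurrence ha fun i hi => by
    simpa using
      infinityGraphMatrix_mulVec_inr_inl x hp ⟨i, hi⟩ ▸ congrFun hx (.inr (.inl ⟨i, hi⟩))
  have hz := eq_pathSolution_of_recurrence hb fun j hj => by
    simpa using
      infinityGraphMatrix_mulVec_inr_inr x hq ⟨j, hj⟩ ▸ congrFun hx (.inr (.inr ⟨j, hj⟩))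
  ext (⟨⟩ | i | j)
  · rfl
  · have h := hy (i + 1) (by omega)
    rw [loopValues_val_succ, loopValues_zero, loopValues_one _ _ (by omega)] at h
    exact h
  · have h := hz (j + 1) (by omega)
    rw [loopValues_val_succ, loopValues_zero, loopValues_one _ _ (by omega)] at h
    exact h

variable {m n : ℕ}

theorem infinityGraphMatrix_mulVec_infinityGraphVector (hm : 1 ≤ m) (hn : 1 ≤ n)
    (ha : ∀ i, a i ^ 2 = 1) (hb : ∀ i, b i ^ 2 = 1)
    (hca : (-1) ^ (m + 1) * ∏ i ∈ range (2 * m + 2), a i = 1)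
    (hcb : (-1) ^ (n + 1) * ∏ i ∈ range (2 * n + 2), b i = 1) (t s u : R) :
    infinityGraphMatrix a b (2 * m + 1) (2 * n + 1) *ᵥ
      infinityGraphVector a b (2 * m + 1) (2 * n + 1) t s u = 0 := by
  have hy := loopValues_eq t (fun i : Fin (2 * m + 1) => pathSolution a t s (i + 1))
    rfl (pathSolution_cycle_closes hca) fun _ => rfl
  have hz := loopValues_eq t (fun j : Fin (2 * n + 1) => pathSolution b t u (j + 1))
    rfl (pathSolution_cycle_closes hcb) fun _ => rfl
  ext (⟨⟩ | i | j) <;> simp only [Pi.zero_apply]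
  · rw [infinityGraphMatrix_mulVec_inl _ (by omega) (by omega)]
    simp only [infinityGraphVector, Sum.elim_inl, Sum.elim_inr]
    rw [hy 1 (by omega), hy _ le_self_add, hz 1 (by omega), hz _ le_self_add,
      pathSolution_centre_balanced ha hca, pathSolution_centre_balanced hb hcb, add_zero]
  · rw [infinityGraphMatrix_mulVec_inr_inl _ (by omega)]
    simp only [infinityGraphVector, Sum.elim_inl, Sum.elim_inr]
    rw [hy _ (by omega), hy _ (by omega), pathSolution_recurrence ha]
  · rw [infinityGraphMatrix_mulVec_inr_inr _ (by omega)]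
    simp only [infinityGraphVector, Sum.elim_inl, Sum.elim_inr]
    rw [hz _ (by omega), hz _ (by omega), pathSolution_recurrence hb]

end infinityGraph

theorem nullity_infinityGraphMatrix {a b : ℕ → ℝ} {m n : ℕ} (hm : 1 ≤ m) (hn : 1 ≤ n)
    (ha : ∀ i, a i ^ 2 = 1) (hb : ∀ i, b i ^ 2 = 1)
    (hca : (-1) ^ (m + 1) * ∏ i ∈ range (2 * m + 2), a i = 1)
    (hcb : (-1) ^ (n + 1) * ∏ i ∈ range (2 * n + 2), b i = 1) :
    (infinityGraphMatrix a b (2 * m + 1) (2 * n + 1)).nullity = 3 := by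
  set M := infinityGraphMatrix a b (2 * m + 1) (2 * n + 1)
  let ev : LinearMap.ker M.mulVecLin →ₗ[ℝ] Fin 3 → ℝ :=
    LinearMap.pi ![LinearMap.proj (.inl ()), LinearMap.proj (.inr (.inl 0)),
      LinearMap.proj (.inr (.inr 0))] ∘ₗ Submodule.subtype _
  have hev : Function.Bijective ev := by
    constructor
    · rintro ⟨x, hx⟩ ⟨x', hx'⟩ h
      rw [LinearMap.mem_ker, mulVecLin_apply] at hx hx'
      refine Subtype.ext (?_ : x = x')
      rw [eq_infinityGraphVector_of_mulVec_eq_zero (by omega) (by omega) ha hb hx,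
        eq_infinityGraphVector_of_mulVec_eq_zero (by omega) (by omega) ha hb hx']
      congr 1 <;> [exact congrFun h 0; exact congrFun h 1; exact congrFun h 2]
    · intro w
      refine ⟨⟨infinityGraphVector a b _ _ (w 0) (w 1) (w 2),
        infinityGraphMatrix_mulVec_infinityGraphVector hm hn ha hb hca hcb _ _ _⟩, ?_⟩
      ext i
      fin_cases i <;> rfl
  rw [Matrix.nullity, (LinearEquiv.ofBijective ev hev).finrank_eq, Module.finrank_fin_fun]

def cyclicSigns {l : ℕ} (α : Fin (l + 1) → ℝ) (i : ℕ) : ℝ := α (Fin.ofNat (l + 1) i)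

theorem cyclicSigns_sq {l : ℕ} {α : Fin (l + 1) → ℝ} (hα : ∀ i, α i = 1 ∨ α i = -1)
    (i : ℕ) :
    cyclicSigns α i ^ 2 = 1 := by
  rw [cyclicSigns]
  rcases hα (Fin.ofNat (l + 1) i) with h | h <;> rw [h] <;> norm_num

theorem prod_range_cyclicSigns {l : ℕ} (α : Fin (l + 1) → ℝ) :
    ∏ i ∈ range (l + 1), cyclicSigns α i = ∏ i, α i := by
  rw [← Fin.prod_univ_eq_prod_range]
  simp [cyclicSigns]

theorem exists_eq_two_mul_add_one_of_cycle_nullity_two {c : ℝ} {p : ℕ}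
    (h : (c = 1 ∧ (p + 1) % 4 = 0) ∨ (c = -1 ∧ (p + 1) % 4 = 2)) :
    ∃ m, p = 2 * m + 1 ∧ (-1) ^ (m + 1) * c = 1 := by
  rcases h with ⟨rfl, h⟩ | ⟨rfl, h⟩
  · exact ⟨p / 2, by omega, by rw [mul_one, Even.neg_one_pow ⟨(p + 1) / 4, by omega⟩]⟩
  · exact ⟨p / 2, by omega, by rw [Odd.neg_one_pow ⟨(p + 1) / 4, by omega⟩]; norm_num⟩

theorem eq_infinityGraphMatrix {p q : ℕ} {α : Fin (p + 1) → ℝ} {β : Fin (q + 1) → ℝ}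
    {A : Matrix (Unit ⊕ Fin p ⊕ Fin q) (Unit ⊕ Fin p ⊕ Fin q) ℝ} (hsymA : A.IsSymm)
    (hA1 : A (Sum.inl ()) (Sum.inl ()) = 0)
    (hA2 : ∀ i : Fin p,
      A (Sum.inl ()) (Sum.inr (Sum.inl i)) =
        if (i : ℕ) = 0 then α 0
        else if (i : ℕ) + 1 = p then α (Fin.last p) else 0)
    (hA3 : ∀ j : Fin q,
      A (Sum.inl ()) (Sum.inr (Sum.inr j)) =
        if (j : ℕ) = 0 then β 0
        else if (j : ℕ) + 1 = q then β (Fin.last q) else 0)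
    (hA4 : ∀ i j : Fin p,
      A (Sum.inr (Sum.inl i)) (Sum.inr (Sum.inl j)) =
        if (i : ℕ) + 1 = (j : ℕ) then α j.castSucc
        else if (j : ℕ) + 1 = (i : ℕ) then α i.castSucc else 0)
    (hA5 : ∀ i j : Fin q,
      A (Sum.inr (Sum.inr i)) (Sum.inr (Sum.inr j)) =
        if (i : ℕ) + 1 = (j : ℕ) then β j.castSucc
        else if (j : ℕ) + 1 = (i : ℕ) then β i.castSucc else 0)
    (hA6 : ∀ (i : Fin p) (j : Fin q),
      A (Sum.inr (Sum.inl i)) (Sum.inr (Sum.inr j)) = 0) :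
    A = infinityGraphMatrix (cyclicSigns α) (cyclicSigns β) p q := by
  ext (⟨⟩ | i | j) (⟨⟩ | i' | j') <;>
    (try rw [hsymA.apply (Sum.inl ()) (Sum.inr _)]) <;>
    (try rw [hsymA.apply (Sum.inr (Sum.inl _)) (Sum.inr (Sum.inr _))]) <;>
    simp [infinityGraphMatrix, pathEndWeights, signedPathMatrix, cyclicSigns,
      hA1, hA2, hA3, hA4, hA5, hA6]

/-- Let `Γ = ∞(l, k, 1)` be the signed ∞-graph obtained from
two vertex-disjoint signed cycles `C_l` and `C_k` (here `l = p + 1 ≥ 3` and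
`k = q + 1 ≥ 3`) by identifying one vertex of each, both cycles having
nullity `2` (positive of length `≡ 0 (mod 4)` or negative of length
`≡ 2 (mod 4)`).  The vertices are the common vertex (`Sum.inl ()`), the other
`p` vertices `c₀, …, c_{p-1}` of the first cycle and the other `q` vertices
`d₀, …, d_{q-1}` of the second cycle; `α 0` is the sign of the edge from the
centre to `c₀`, `α t` the sign of `c_{t-1}c_t`, and `α p` the sign of
`c_{p-1}`–centre, and similarly `β` for the second cycle.  Then `η(Γ) = 3`. -/
theorem nullity_infinity_graph (p q : ℕ) (hp : 2 ≤ p) (hq : 2 ≤ q)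
    (α : Fin (p + 1) → ℝ) (β : Fin (q + 1) → ℝ)
    (hα : ∀ i, α i = 1 ∨ α i = -1) (hβ : ∀ i, β i = 1 ∨ β i = -1)
    (hα2 : ((∏ i, α i) = 1 ∧ (p + 1) % 4 = 0) ∨
           ((∏ i, α i) = -1 ∧ (p + 1) % 4 = 2))
    (hβ2 : ((∏ i, β i) = 1 ∧ (q + 1) % 4 = 0) ∨
           ((∏ i, β i) = -1 ∧ (q + 1) % 4 = 2))
    (A : Matrix (Unit ⊕ Fin p ⊕ Fin q) (Unit ⊕ Fin p ⊕ Fin q) ℝ)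
    (hsymA : A.IsSymm)
    (hA1 : A (Sum.inl ()) (Sum.inl ()) = 0)
    (hA2 : ∀ i : Fin p,
      A (Sum.inl ()) (Sum.inr (Sum.inl i)) =
        if (i : ℕ) = 0 then α 0
        else if (i : ℕ) + 1 = p then α (Fin.last p) else 0)
    (hA3 : ∀ j : Fin q,
      A (Sum.inl ()) (Sum.inr (Sum.inr j)) =
        if (j : ℕ) = 0 then β 0
        else if (j : ℕ) + 1 = q then β (Fin.last q) else 0)
    (hA4 : ∀ i j : Fin p,
      A (Sum.inr (Sum.inl i)) (Sum.inr (Sum.inl j)) =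
        if (i : ℕ) + 1 = (j : ℕ) then α j.castSucc
        else if (j : ℕ) + 1 = (i : ℕ) then α i.castSucc else 0)
    (hA5 : ∀ i j : Fin q,
      A (Sum.inr (Sum.inr i)) (Sum.inr (Sum.inr j)) =
        if (i : ℕ) + 1 = (j : ℕ) then β j.castSucc
        else if (j : ℕ) + 1 = (i : ℕ) then β i.castSucc else 0)
    (hA6 : ∀ (i : Fin p) (j : Fin q),
      A (Sum.inr (Sum.inl i)) (Sum.inr (Sum.inr j)) = 0) :
    A.nullity = 3 := by
  obtain ⟨m, rfl, hcα⟩ := exists_eq_two_mul_add_one_of_cycle_nullity_two hα2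
  obtain ⟨n, rfl, hcβ⟩ := exists_eq_two_mul_add_one_of_cycle_nullity_two hβ2
  rw [eq_infinityGraphMatrix hsymA hA1 hA2 hA3 hA4 hA5 hA6]
  rw [← prod_range_cyclicSigns] at hcα hcβ
  exact nullity_infinityGraphMatrix (by omega) (by omega) (cyclicSigns_sq hα) (cyclicSigns_sq hβ)
    hcα hcβ
end
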